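/- arXiv:2212.02374 — 3 statements merged into one kernel-verified Lean document; each statement's English description precedes it below -/
import Mathlib

section
/- Let G be a finite simple undirected connected non-bipartite graph, let f be any initial probability distribution on the vertices, and define λ' = λ₂ if 1 − λ₂ ≥ λ_N − 1, and λ' = 2 − λ_N otherwise. Then for any ε > 0 and any positive integer s satisfying s ≥ (1/λ') · log( (maxᵢ √dᵢ) / (ε · minⱼ √dⱼ) ), the distance to the stationary distribution satisfies ‖fᵀPˢ − π‖₂ ≤ ε. -/
open Matrix Finset


lemma aux_rowsum {N : ℕ} (G : SimpleGraph (Fin N)) [DecidableRel G.Adj] (i : Fin N) :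
    ∑ j, (G.adjMatrix ℝ) i j = (G.degree i : ℝ) := by
  simp [SimpleGraph.degree, SimpleGraph.neighborFinset, Finset.sum_ite_eq,
    SimpleGraph.adjMatrix_apply, Finset.sum_boole]

lemma aux_colsum {N : ℕ} (G : SimpleGraph (Fin N)) [DecidableRel G.Adj] (j : Fin N) :
    ∑ i, (G.adjMatrix ℝ) i j = (G.degree j : ℝ) := by
  rw [← aux_rowsum G j]
  exact Finset.sum_congr rfl fun i _ => by simp [SimpleGraph.adj_comm]

lemma aux_quad {N : ℕ} (G : SimpleGraph (Fin N)) [DecidableRel G.Adj] (y : Fin N → ℝ) (c : ℝ) :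
    ∑ i, ∑ j, (G.adjMatrix ℝ) i j * (y i + c * y j)^2
    = (1 + c^2) * (∑ i, (G.degree i : ℝ) * y i^2)
      + 2 * c * ∑ i, ∑ j, (G.adjMatrix ℝ) i j * (y i * y j) := by
  have h1 : ∑ i, ∑ j, (G.adjMatrix ℝ) i j * (y i)^2 = ∑ i, (G.degree i : ℝ) * y i^2 := by
    refine Finset.sum_congr rfl fun i _ => ?_
    rw [← Finset.sum_mul, aux_rowsum]
  have h2 : ∑ i, ∑ j, (G.adjMatrix ℝ) i j * (y j)^2 = ∑ i, (G.degree i : ℝ) * y i^2 := by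
    rw [Finset.sum_comm]
    refine Finset.sum_congr rfl fun j _ => ?_
    rw [← Finset.sum_mul, aux_colsum]
  calc ∑ i, ∑ j, (G.adjMatrix ℝ) i j * (y i + c * y j)^2
      = ∑ i, ∑ j, ((G.adjMatrix ℝ) i j * (y i)^2 + c^2 * ((G.adjMatrix ℝ) i j * (y j)^2)
          + 2*c*((G.adjMatrix ℝ) i j * (y i * y j))) := by
        refine Finset.sum_congr rfl fun i _ => Finset.sum_congr rfl fun j _ => by ring
    _ = (1 + c^2) * (∑ i, (G.degree i : ℝ) * y i^2)
          + 2 * c * ∑ i, ∑ j, (G.adjMatrix ℝ) i j * (y i * y j) := by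
        simp only [Finset.sum_add_distrib, ← Finset.mul_sum, h1, h2]; ring

lemma aux_const_of_adj {N : ℕ} {G : SimpleGraph (Fin N)} (hconn : G.Connected)
    {y : Fin N → ℝ} (h : ∀ i j, G.Adj i j → y i = y j) (i j : Fin N) : y i = y j := by
  obtain ⟨w⟩ := hconn.preconnected i j
  induction w with
  | nil => rfl
  | cons hadj p ih => exact (h _ _ hadj).trans ih

lemma aux_iso {N : ℕ} {U : Matrix (Fin N) (Fin N) ℝ} (h : Uᵀ * U = 1) (v : Fin N → ℝ) :
    (U *ᵥ v) ⬝ᵥ (U *ᵥ v) = v ⬝ᵥ v := by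
  rw [Matrix.dotProduct_mulVec, ← Matrix.mulVec_transpose, Matrix.mulVec_mulVec, h,
    Matrix.one_mulVec]

lemma aux_conj_pow {N : ℕ} (A B M : Matrix (Fin N) (Fin N) ℝ) (hBA : B * A = 1) (s : ℕ) :
    (A * M * B)^s = A * M^s * B := by
  have hAB : A * B = 1 := mul_eq_one_comm.mp hBA
  induction s with
  | zero => simp [hAB]
  | succ n ih =>
      rw [pow_succ, pow_succ, ih]
      calc A * M ^ n * B * (A * M * B) = A * M ^ n * (B * A) * M * B := by
            simp only [Matrix.mul_assoc]
        _ = A * (M ^ n * M) * B := by rw [hBA, Matrix.mul_one]; simp only [Matrix.mul_assoc]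

lemma aux_diag_pow {N : ℕ} (U : Matrix (Fin N) (Fin N) ℝ) (hU : U * Uᵀ = 1)
    (μ : Fin N → ℝ) (s : ℕ) :
    (U * Matrix.diagonal μ * Uᵀ)^s = U * Matrix.diagonal (fun k => μ k ^ s) * Uᵀ := by
  have hUtU : Uᵀ * U = 1 := mul_eq_one_comm.mp hU
  induction s with
  | zero => simp [hU]
  | succ n ih =>
      rw [pow_succ, ih]
      calc U * Matrix.diagonal (fun k => μ k ^ n) * Uᵀ * (U * Matrix.diagonal μ * Uᵀ)
          = U * Matrix.diagonal (fun k => μ k ^ n) * (Uᵀ * U) * Matrix.diagonal μ * Uᵀ := by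
            simp only [Matrix.mul_assoc]
        _ = U * Matrix.diagonal (fun k => μ k ^ (n+1)) * Uᵀ := by
            rw [hUtU, Matrix.mul_one, Matrix.mul_assoc U, Matrix.diagonal_mul_diagonal]
            simp [pow_succ, Matrix.mul_assoc]

section Forms
variable {N : ℕ} (G : SimpleGraph (Fin N)) [DecidableRel G.Adj]
  (d : Fin N → ℝ) (hd : ∀ i, d i = (G.degree i : ℝ)) (hdpos : ∀ i, 0 < d i)
  (Lsym : Matrix (Fin N) (Fin N) ℝ)
  (hL : ∀ i j, Lsym i j = (if i = j then (1 : ℝ) else 0)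
      - (G.adjMatrix ℝ) i j / (Real.sqrt (d i) * Real.sqrt (d j)))

include hdpos hL in
lemma aux_form (x y : Fin N → ℝ) (hy : ∀ i, x i = Real.sqrt (d i) * y i) :
    x ⬝ᵥ (Lsym *ᵥ x) = (∑ i, d i * y i ^ 2) - ∑ i, ∑ j, (G.adjMatrix ℝ) i j * (y i * y j)
    ∧ x ⬝ᵥ x = ∑ i, d i * y i ^ 2 := by
  have hsq : ∀ i, Real.sqrt (d i) * Real.sqrt (d i) = d i :=
    fun i => Real.mul_self_sqrt (hdpos i).le
  have hsne : ∀ i, Real.sqrt (d i) ≠ 0 :=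
    fun i => ne_of_gt (Real.sqrt_pos.mpr (hdpos i))
  constructor
  · calc x ⬝ᵥ (Lsym *ᵥ x) = ∑ i, ∑ j, x i * (Lsym i j * x j) := by
          simp [dotProduct, Matrix.mulVec, Finset.mul_sum]
      _ = ∑ i, ∑ j, ((if i = j then d i * y i ^ 2 else 0)
            - (G.adjMatrix ℝ) i j * (y i * y j)) := by
          refine Finset.sum_congr rfl fun i _ => Finset.sum_congr rfl fun j _ => ?_
          rw [hL, hy i, hy j]
          by_cases h : i = j
          · subst h
            simp only [if_pos rfl, SimpleGraph.adjMatrix_apply, if_neg (G.irrefl)]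
            field_simp
            simp only [if_true, ite_true, zero_div, sub_zero, mul_one, mul_zero]
            linear_combination y i ^ 2 * hsq i
          · simp only [if_neg h, SimpleGraph.adjMatrix_apply]
            by_cases hadj : G.Adj i j
            · simp only [if_pos hadj]
              rw [zero_sub, zero_sub]
              field_simp
              rw [neg_inj, div_eq_iff (mul_ne_zero (hsne i) (hsne j))]
              ring
            · simp [if_neg hadj]
      _ = (∑ i, d i * y i ^ 2) - ∑ i, ∑ j, (G.adjMatrix ℝ) i j * (y i * y j) := by
          simp only [Finset.sum_sub_distrib]
          congr 1
          refine Finset.sum_congr rfl fun i _ => ?_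
          simp
  · simp only [dotProduct]
    refine Finset.sum_congr rfl fun i _ => ?_
    rw [hy i]
    nlinarith [hsq i]
end Forms

section Forms2
variable {N : ℕ} (G : SimpleGraph (Fin N)) [DecidableRel G.Adj]
  (d : Fin N → ℝ) (hd : ∀ i, d i = (G.degree i : ℝ)) (hdpos : ∀ i, 0 < d i)
  (Lsym : Matrix (Fin N) (Fin N) ℝ)
  (hL : ∀ i j, Lsym i j = (if i = j then (1 : ℝ) else 0)
      - (G.adjMatrix ℝ) i j / (Real.sqrt (d i) * Real.sqrt (d j)))

include hd hdpos hL in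
lemma aux_form2 (x : Fin N → ℝ) :
    (2 * (x ⬝ᵥ (Lsym *ᵥ x)) = ∑ i, ∑ j, (G.adjMatrix ℝ) i j *
        (x i / Real.sqrt (d i) - x j / Real.sqrt (d j))^2)
    ∧ (2 * (2 * (x ⬝ᵥ x) - x ⬝ᵥ (Lsym *ᵥ x)) = ∑ i, ∑ j, (G.adjMatrix ℝ) i j *
        (x i / Real.sqrt (d i) + x j / Real.sqrt (d j))^2)
    ∧ (x ⬝ᵥ x = ∑ i, d i * (x i / Real.sqrt (d i)) ^ 2) := by
  set y := fun i => x i / Real.sqrt (d i) with hy'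
  have hsne : ∀ i, Real.sqrt (d i) ≠ 0 :=
    fun i => ne_of_gt (Real.sqrt_pos.mpr (hdpos i))
  have hy : ∀ i, x i = Real.sqrt (d i) * y i := fun i => by
    rw [hy']
    field_simp
    rw [mul_div_assoc, div_self (hsne i), mul_one]
  obtain ⟨h1, h2⟩ := aux_form G d hdpos Lsym hL x y hy
  have hdeg : ∀ z : Fin N → ℝ, ∑ i, (G.degree i : ℝ) * z i ^ 2 = ∑ i, d i * z i ^ 2 :=
    fun z => Finset.sum_congr rfl fun i _ => by rw [hd]
  have q1 := aux_quad G y (-1)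
  simp only [neg_one_mul, ← sub_eq_add_neg] at q1
  rw [hdeg] at q1
  have q2 := aux_quad G y 1
  simp only [one_mul] at q2
  rw [hdeg] at q2
  refine ⟨?_, ?_, h2⟩
  · rw [h1, q1]; ring
  · rw [h2, h1, q2]; ring

include hd hdpos hL in
lemma aux_psd (x : Fin N → ℝ) : 0 ≤ x ⬝ᵥ (Lsym *ᵥ x) := by
  obtain ⟨h1, -, -⟩ := aux_form2 G d hd hdpos Lsym hL x
  have : (0:ℝ) ≤ ∑ i, ∑ j, (G.adjMatrix ℝ) i j *
      (x i / Real.sqrt (d i) - x j / Real.sqrt (d j))^2 := by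
    refine Finset.sum_nonneg fun i _ => Finset.sum_nonneg fun j _ => mul_nonneg ?_ (sq_nonneg _)
    by_cases h : G.Adj i j <;> simp [h]
  linarith

include hd hdpos hL in
lemma aux_le2 (x : Fin N → ℝ) : x ⬝ᵥ (Lsym *ᵥ x) ≤ 2 * (x ⬝ᵥ x) := by
  obtain ⟨-, h2, -⟩ := aux_form2 G d hd hdpos Lsym hL x
  have : (0:ℝ) ≤ ∑ i, ∑ j, (G.adjMatrix ℝ) i j *
      (x i / Real.sqrt (d i) + x j / Real.sqrt (d j))^2 := by
    refine Finset.sum_nonneg fun i _ => Finset.sum_nonneg fun j _ => mul_nonneg ?_ (sq_nonneg _)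
    by_cases h : G.Adj i j <;> simp [h]
  linarith
end Forms2

section Forms3
variable {N : ℕ} {G : SimpleGraph (Fin N)} [DecidableRel G.Adj]
  {d : Fin N → ℝ} (hd : ∀ i, d i = (G.degree i : ℝ)) (hdpos : ∀ i, 0 < d i)
  {Lsym : Matrix (Fin N) (Fin N) ℝ}
  (hL : ∀ i j, Lsym i j = (if i = j then (1 : ℝ) else 0)
      - (G.adjMatrix ℝ) i j / (Real.sqrt (d i) * Real.sqrt (d j)))
  (hconn : G.Connected)

include hd hdpos hL hconn in
lemma aux_ker (x : Fin N → ℝ) (hx : Lsym *ᵥ x = 0) :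
    ∃ c : ℝ, ∀ i, x i = c * Real.sqrt (d i) := by
  have hsne : ∀ i, Real.sqrt (d i) ≠ 0 :=
    fun i => ne_of_gt (Real.sqrt_pos.mpr (hdpos i))
  obtain ⟨h1, -, -⟩ := aux_form2 G d hd hdpos Lsym hL x
  rw [hx, dotProduct_zero, mul_zero] at h1
  have hterm : ∀ i ∈ Finset.univ, ∀ j ∈ (Finset.univ : Finset (Fin N)),
      (0:ℝ) ≤ (G.adjMatrix ℝ) i j * (x i / Real.sqrt (d i) - x j / Real.sqrt (d j))^2 :=
    fun i _ j _ => mul_nonneg (by by_cases h : G.Adj i j <;> simp [h]) (sq_nonneg _)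
  have hzero : ∀ i j, (G.adjMatrix ℝ) i j *
      (x i / Real.sqrt (d i) - x j / Real.sqrt (d j))^2 = 0 := by
    intro i j
    have houter := (Finset.sum_eq_zero_iff_of_nonneg
      (fun i _ => Finset.sum_nonneg (hterm i (Finset.mem_univ i)))).mp h1.symm
    exact (Finset.sum_eq_zero_iff_of_nonneg
      (hterm i (Finset.mem_univ i))).mp (houter i (Finset.mem_univ i)) j (Finset.mem_univ j)
  have hadjrel : ∀ i j, G.Adj i j → x i / Real.sqrt (d i) = x j / Real.sqrt (d j) := by
    intro i j hadj
    have := hzero i j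
    rw [SimpleGraph.adjMatrix_apply, if_pos hadj, one_mul] at this
    exact sub_eq_zero.mp (pow_eq_zero_iff (n := 2) (by norm_num) |>.mp this)
  obtain ⟨i0⟩ := hconn.nonempty
  refine ⟨x i0 / Real.sqrt (d i0), fun i => ?_⟩
  have h := aux_const_of_adj hconn hadjrel i i0
  rw [div_eq_div_iff (hsne i) (hsne i0)] at h
  rw [div_mul_eq_mul_div, eq_div_iff (hsne i0)]
  linear_combination h

include hd hdpos hL hconn in
lemma aux_two (x : Fin N → ℝ) (hx : Lsym *ᵥ x = (2:ℝ) • x) (hxne : x ≠ 0) :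
    G.Colorable 2 := by
  have hsne : ∀ i, Real.sqrt (d i) ≠ 0 :=
    fun i => ne_of_gt (Real.sqrt_pos.mpr (hdpos i))
  set y := fun i => x i / Real.sqrt (d i) with hy'
  obtain ⟨-, h2, -⟩ := aux_form2 G d hd hdpos Lsym hL x
  rw [hx] at h2
  have hdp : x ⬝ᵥ ((2:ℝ) • x) = 2 * (x ⬝ᵥ x) := by
    simp [dotProduct_smul]
  rw [hdp] at h2
  have h2' : ∑ i, ∑ j, (G.adjMatrix ℝ) i j * (y i + y j)^2 = 0 := by
    rw [← h2]; ring
  have hterm : ∀ i ∈ Finset.univ, ∀ j ∈ (Finset.univ : Finset (Fin N)),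
      (0:ℝ) ≤ (G.adjMatrix ℝ) i j * (y i + y j)^2 :=
    fun i _ j _ => mul_nonneg (by by_cases h : G.Adj i j <;> simp [h]) (sq_nonneg _)
  have hadjrel : ∀ i j, G.Adj i j → y j = - y i := by
    intro i j hadj
    have houter := (Finset.sum_eq_zero_iff_of_nonneg
      (fun i _ => Finset.sum_nonneg (hterm i (Finset.mem_univ i)))).mp h2'
    have := (Finset.sum_eq_zero_iff_of_nonneg
      (hterm i (Finset.mem_univ i))).mp (houter i (Finset.mem_univ i)) j (Finset.mem_univ j)
    rw [SimpleGraph.adjMatrix_apply, if_pos hadj, one_mul] at this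
    have := pow_eq_zero_iff (n := 2) (by norm_num) |>.mp this
    linarith
  have hsqconst : ∀ i j, (y i)^2 = (y j)^2 := by
    refine fun i j => aux_const_of_adj hconn (y := fun i => (y i)^2) ?_ i j
    intro a b hadj
    show (y a)^2 = (y b)^2
    rw [hadjrel a b hadj]; ring
  obtain ⟨i1, hi1⟩ := Function.ne_iff.mp hxne
  have hyi1 : y i1 ≠ 0 := by
    intro h
    apply hi1
    show x i1 = 0
    rcases div_eq_zero_iff.mp h with h' | h'
    · exact h'
    · exact absurd h' (hsne i1)
  have hyne : ∀ i, y i ≠ 0 := by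
    intro i h
    apply hyi1
    have h2 := hsqconst i1 i
    rw [h] at h2
    have h3 : y i1 ^ 2 = 0 := by simpa using h2
    exact pow_eq_zero_iff (n := 2) (by norm_num) |>.mp h3
  exact ⟨SimpleGraph.Coloring.mk (fun i => if 0 < y i then 0 else 1) (by
    intro i j hadj
    have hji := hadjrel i j hadj
    rcases (hyne i).lt_or_gt with hneg | hpos
    · have : 0 < y j := by rw [hji]; linarith
      simp [not_lt.mpr hneg.le, this]
    · have : ¬ 0 < y j := by rw [hji]; linarith
      simp [hpos, this])⟩
end Forms3

/-- If `s ≥ (1/λ') · log( (maxᵢ √dᵢ) / (ε · minⱼ √dⱼ) )`, then the random walk on a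
finite simple undirected connected non-bipartite graph satisfies `‖fᵀPˢ − π‖₂ ≤ ε`. -/
theorem stmt_1
    {N : ℕ} (hN : 1 < N)
    (G : SimpleGraph (Fin N)) [DecidableRel G.Adj]
    (hconn : G.Connected)
    (hnonbip : ¬ G.Colorable 2)
    -- degrees
    (d : Fin N → ℝ)
    (hd : ∀ i, d i = (G.degree i : ℝ))
    (hdpos : ∀ i, 0 < d i)
    -- random walk transition matrix P = D⁻¹A
    (P : Matrix (Fin N) (Fin N) ℝ)
    (hP : ∀ i j, P i j = (G.adjMatrix ℝ) i j / d i)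
    -- stationary distribution π(i) = dᵢ / vol(G)
    (statDist : Fin N → ℝ)
    (hstat : ∀ i, statDist i = d i / ∑ j, d j)
    -- symmetrically normalized Laplacian
    (Lsym : Matrix (Fin N) (Fin N) ℝ)
    (hL : ∀ i j, Lsym i j = (if i = j then (1 : ℝ) else 0)
        - (G.adjMatrix ℝ) i j / (Real.sqrt (d i) * Real.sqrt (d j)))
    -- λ₁ ≤ λ₂ ≤ … ≤ λ_N : eigenvalues of Lsym (orthogonal diagonalization)
    (lam : Fin N → ℝ) (hmono : Monotone lam)
    (U : Matrix (Fin N) (Fin N) ℝ) (hU : U * Uᵀ = 1)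
    (hspec : Lsym = U * Matrix.diagonal lam * Uᵀ)
    -- maxᵢ √dᵢ and minⱼ √dⱼ
    (dmax dmin : ℝ)
    (hdmax : IsGreatest (Set.range fun i => Real.sqrt (d i)) dmax)
    (hdmin : IsLeast (Set.range fun i => Real.sqrt (d i)) dmin)
    -- initial probability distribution
    (f : Fin N → ℝ) (hf0 : ∀ v, 0 ≤ f v) (hf1 : ∑ v, f v = 1)
    -- λ'
    (lam' : ℝ)
    (hlam' : lam' = if 1 - lam ⟨1, hN⟩ ≥ lam ⟨N - 1, by omega⟩ - 1
        then lam ⟨1, hN⟩ else 2 - lam ⟨N - 1, by omega⟩)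
    -- ε and the number of steps s
    (eps : ℝ) (heps : 0 < eps)
    (s : ℕ) (hs : 0 < s)
    (hsge : (s : ℝ) ≥ (1 / lam') * Real.log (dmax / (eps * dmin))) :
    Real.sqrt (∑ j, (Matrix.vecMul f (P ^ s) j - statDist j) ^ 2) ≤ eps := by
  have hUtU : Uᵀ * U = 1 := mul_eq_one_comm.mp hU
  have hsqpos : ∀ i, 0 < Real.sqrt (d i) := fun i => Real.sqrt_pos.mpr (hdpos i)
  have hsne : ∀ i, Real.sqrt (d i) ≠ 0 := fun i => (hsqpos i).ne'
  have hsq : ∀ i, Real.sqrt (d i) * Real.sqrt (d i) = d i :=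
    fun i => Real.mul_self_sqrt (hdpos i).le
  set vol : ℝ := ∑ j, d j with hvol
  have hvolpos : 0 < vol := Finset.sum_pos (fun i _ => hdpos i) ⟨⟨0, by omega⟩, Finset.mem_univ _⟩
  -- eigen basics
  have hLU : Lsym * U = U * Matrix.diagonal lam := by
    rw [hspec, Matrix.mul_assoc, Matrix.mul_assoc, hUtU, Matrix.mul_one]
  have hcolumn : ∀ k, Lsym *ᵥ (fun i => U i k) = lam k • (fun i => U i k) := by
    intro k
    funext i
    have := congrFun (congrFun hLU i) k
    rw [Matrix.mul_apply, Matrix.mul_diagonal] at this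
    simpa [Matrix.mulVec, dotProduct, mul_comm] using this
  have hortho : ∀ k l, (fun i => U i k) ⬝ᵥ (fun i => U i l) = if k = l then (1:ℝ) else 0 := by
    intro k l
    have := congrFun (congrFun hUtU k) l
    rw [Matrix.mul_apply] at this
    simpa [dotProduct, Matrix.transpose_apply, Matrix.one_apply] using this
  have hdotself : ∀ k, (fun i => U i k) ⬝ᵥ (fun i => U i k) = 1 := by
    intro k; rw [hortho k k, if_pos rfl]
  have hlam_nonneg : ∀ k, 0 ≤ lam k := by
    intro k
    have h1 := aux_psd G d hd hdpos Lsym hL (fun i => U i k)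
    rw [hcolumn k, dotProduct_smul, hdotself k] at h1
    simpa using h1
  have hlam_le2 : ∀ k, lam k ≤ 2 := by
    intro k
    have h1 := aux_le2 G d hd hdpos Lsym hL (fun i => U i k)
    rw [hcolumn k, dotProduct_smul, hdotself k] at h1
    simpa using h1
  -- sqrt-degree vector is in the kernel
  have hphi : Lsym *ᵥ (fun i => Real.sqrt (d i)) = 0 := by
    funext i
    show ∑ j, Lsym i j * Real.sqrt (d j) = 0
    have hterm : ∀ j, Lsym i j * Real.sqrt (d j)
        = (if i = j then (1:ℝ) else 0) * Real.sqrt (d j)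
          - (G.adjMatrix ℝ) i j / Real.sqrt (d i) := by
      intro j
      rw [hL, sub_mul, ← div_div, div_mul_cancel₀ _ (hsne j)]
    calc ∑ j, Lsym i j * Real.sqrt (d j)
        = (∑ j, (if i = j then (1:ℝ) else 0) * Real.sqrt (d j))
          - ∑ j, (G.adjMatrix ℝ) i j / Real.sqrt (d i) := by
          simp only [hterm, Finset.sum_sub_distrib]
      _ = Real.sqrt (d i) - (∑ j, (G.adjMatrix ℝ) i j) / Real.sqrt (d i) := by
          rw [← Finset.sum_div]
          congr 1
          simp
      _ = 0 := by
          rw [aux_rowsum, ← hd, Real.div_sqrt, sub_self]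
  -- the smallest eigenvalue is 0
  have hlam0 : lam ⟨0, by omega⟩ = 0 := by
    have h1 : U *ᵥ (Matrix.diagonal lam *ᵥ (Uᵀ *ᵥ (fun i => Real.sqrt (d i)))) = 0 := by
      rw [Matrix.mulVec_mulVec, Matrix.mulVec_mulVec, ← hspec, hphi]
    have hz : Matrix.diagonal lam *ᵥ (Uᵀ *ᵥ (fun i => Real.sqrt (d i))) = 0 := by
      have h2 := congrArg (fun v => Uᵀ *ᵥ v) h1
      simpa [Matrix.mulVec_mulVec, ← Matrix.mul_assoc, hUtU] using h2
    have hzz : Uᵀ *ᵥ (fun i => Real.sqrt (d i)) ≠ 0 := by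
      intro h0
      have h3 : (fun i => Real.sqrt (d i)) = (0 : Fin N → ℝ) := by
        have : U *ᵥ (Uᵀ *ᵥ (fun i => Real.sqrt (d i))) = U *ᵥ 0 := by rw [h0]
        simpa [Matrix.mulVec_mulVec, hU] using this
      exact hsne ⟨0, by omega⟩ (congrFun h3 ⟨0, by omega⟩)
    obtain ⟨k, hk⟩ := Function.ne_iff.mp hzz
    have hk0 : lam k * (Uᵀ *ᵥ (fun i => Real.sqrt (d i))) k = 0 := by
      have := congrFun hz k
      simpa [Matrix.mulVec_diagonal] using this
    have hlamk : lam k = 0 := by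
      rcases mul_eq_zero.mp hk0 with h | h
      · exact h
      · exact absurd h (by simpa using hk)
    refine le_antisymm ?_ (hlam_nonneg _)
    calc lam ⟨0, by omega⟩ ≤ lam k := hmono (by simp [Fin.le_def])
      _ = 0 := hlamk
  obtain ⟨c0, hc0⟩ := aux_ker hd hdpos hL hconn (fun i => U i ⟨0, by omega⟩)
    (by rw [hcolumn, hlam0, zero_smul])
  -- second eigenvalue positive (connectivity)
  have hdotcc : ∀ (c : ℝ), (fun i => c * Real.sqrt (d i)) ⬝ᵥ (fun i => c * Real.sqrt (d i))
      = c^2 * vol := by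
    intro c
    simp only [dotProduct]
    rw [hvol, Finset.mul_sum]
    refine Finset.sum_congr rfl fun i _ => ?_
    linear_combination c^2 * hsq i
  have lam2pos : 0 < lam ⟨1, hN⟩ := by
    by_contra hle
    have hlam1 : lam ⟨1, hN⟩ = 0 := le_antisymm (not_lt.mp hle) (hlam_nonneg _)
    obtain ⟨c1, hc1⟩ := aux_ker hd hdpos hL hconn (fun i => U i ⟨1, hN⟩)
      (by rw [hcolumn, hlam1, zero_smul])
    have h00 : c0^2 * vol = 1 := by
      rw [← hdotcc c0, ← hdotself ⟨0, by omega⟩]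
      simp only [dotProduct]
      exact Finset.sum_congr rfl fun i _ => by rw [hc0]
    have h11 : c1^2 * vol = 1 := by
      rw [← hdotcc c1, ← hdotself ⟨1, hN⟩]
      simp only [dotProduct]
      exact Finset.sum_congr rfl fun i _ => by rw [hc1]
    have h01 : c0 * c1 * vol = 0 := by
      have h2 := hortho ⟨0, by omega⟩ ⟨1, hN⟩
      rw [if_neg (Fin.ne_of_val_ne (by simp))] at h2
      rw [← h2]
      simp only [dotProduct]
      rw [Finset.mul_sum]
      refine Finset.sum_congr rfl fun i _ => ?_
      rw [hc0, hc1]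
      linear_combination (-(c0 * c1)) * hsq i
    have hc0ne : c0 ≠ 0 := by intro h; rw [h] at h00; simp at h00
    have hc1ne : c1 ≠ 0 := by intro h; rw [h] at h11; simp at h11
    exact (mul_ne_zero (mul_ne_zero hc0ne hc1ne) hvolpos.ne') h01
  -- largest eigenvalue below 2 (non-bipartiteness)
  have lamNlt2 : lam ⟨N - 1, by omega⟩ < 2 := by
    by_contra hge
    have hlamN : lam ⟨N - 1, by omega⟩ = 2 := le_antisymm (hlam_le2 _) (not_lt.mp hge)
    have hvec2 : Lsym *ᵥ (fun i => U i ⟨N - 1, by omega⟩)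
        = (2:ℝ) • (fun i => U i ⟨N - 1, by omega⟩) := by rw [hcolumn, hlamN]
    have hne : (fun i => U i ⟨N - 1, by omega⟩) ≠ 0 := by
      intro h0
      have := hdotself ⟨N - 1, by omega⟩
      rw [h0] at this
      simp at this
    exact hnonbip (aux_two hd hdpos hL hconn _ hvec2 hne)
  -- properties of lam'
  have hlam'pos : 0 < lam' := by
    rw [hlam']
    split_ifs with h
    · exact lam2pos
    · linarith [lamNlt2]
  have habs : ∀ k : Fin N, k ≠ ⟨0, by omega⟩ → |1 - lam k| ≤ 1 - lam' := by
    intro k hk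
    have hkv : k.val ≠ 0 := fun h => hk (Fin.ext h)
    have h1 : lam ⟨1, hN⟩ ≤ lam k := hmono (by simp only [Fin.le_def, Fin.val_mk]; omega)
    have h2 : lam k ≤ lam ⟨N - 1, by omega⟩ := by
      refine hmono ?_
      simp only [Fin.le_def, Fin.val_mk]
      omega
    rw [hlam', abs_le]
    split_ifs with h
    · constructor <;> linarith
    · constructor <;> linarith
  have hgap : 0 ≤ 1 - lam' := by
    have h := habs ⟨1, hN⟩ (Fin.ne_of_val_ne (by simp))
    linarith [abs_nonneg (1 - lam ⟨1, hN⟩), neg_abs_le (1 - lam ⟨1, hN⟩)]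
  -- matrix factorizations
  have hMent : ∀ i j, ((1 : Matrix (Fin N) (Fin N) ℝ) - Lsym) i j
      = (G.adjMatrix ℝ) i j / (Real.sqrt (d i) * Real.sqrt (d j)) := by
    intro i j
    rw [Matrix.sub_apply, hL, Matrix.one_apply]
    ring
  have hDD : Matrix.diagonal (fun i => Real.sqrt (d i)) *
      Matrix.diagonal (fun i => (Real.sqrt (d i))⁻¹) = 1 := by
    rw [Matrix.diagonal_mul_diagonal]
    rw [show (fun i => Real.sqrt (d i) * (Real.sqrt (d i))⁻¹) = fun _ => (1:ℝ) from
      funext fun i => mul_inv_cancel₀ (hsne i), Matrix.diagonal_one]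
  have hPfact : P = Matrix.diagonal (fun i => (Real.sqrt (d i))⁻¹) * (1 - Lsym) *
      Matrix.diagonal (fun i => Real.sqrt (d i)) := by
    ext i j
    rw [Matrix.mul_diagonal, Matrix.diagonal_mul, hMent, hP]
    by_cases hadj : G.Adj i j
    · rw [SimpleGraph.adjMatrix_apply, if_pos hadj, one_div, one_div, mul_inv]
      rw [show (Real.sqrt (d i))⁻¹ * ((Real.sqrt (d i))⁻¹ * (Real.sqrt (d j))⁻¹) * Real.sqrt (d j)
          = (Real.sqrt (d i) * Real.sqrt (d i))⁻¹ * ((Real.sqrt (d j))⁻¹ * Real.sqrt (d j)) from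
          by ring, inv_mul_cancel₀ (hsne j), mul_one, hsq]
    · simp [hadj]
  have hPs : P ^ s = Matrix.diagonal (fun i => (Real.sqrt (d i))⁻¹) * ((1 - Lsym)^s) *
      Matrix.diagonal (fun i => Real.sqrt (d i)) := by
    rw [hPfact]; exact aux_conj_pow _ _ _ hDD s
  have hMdiag : (1 : Matrix (Fin N) (Fin N) ℝ) - Lsym
      = U * Matrix.diagonal (fun k => 1 - lam k) * Uᵀ := by
    have hdg : Matrix.diagonal (fun k => (1:ℝ) - lam k) = 1 - Matrix.diagonal lam := by
      rw [← Matrix.diagonal_one, ← Matrix.diagonal_sub]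
    rw [hdg, Matrix.mul_sub, Matrix.sub_mul, Matrix.mul_one, hU, ← hspec]
  have hMspow : ∀ t : ℕ, ((1 : Matrix (Fin N) (Fin N) ℝ) - Lsym)^t
      = U * Matrix.diagonal (fun k => (1 - lam k)^t) * Uᵀ := fun t => by
    rw [hMdiag]; exact aux_diag_pow U hU _ t
  -- the stationary part
  have hMsqv : (1 - Lsym) *ᵥ (fun i => Real.sqrt (d i)) = (fun i => Real.sqrt (d i)) := by
    rw [Matrix.sub_mulVec, Matrix.one_mulVec, hphi, sub_zero]
  have hMsqvpow : ∀ t : ℕ, ((1 - Lsym)^t) *ᵥ (fun i => Real.sqrt (d i))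
      = (fun i => Real.sqrt (d i)) := by
    intro t
    induction t with
    | zero => simp
    | succ n ih => rw [pow_succ', ← Matrix.mulVec_mulVec, ih, hMsqv]
  have hMsymm : ((1 : Matrix (Fin N) (Fin N) ℝ) - Lsym)ᵀ = 1 - Lsym := by
    ext i j
    rw [Matrix.transpose_apply, hMent, hMent]
    have hA : (G.adjMatrix ℝ) j i = (G.adjMatrix ℝ) i j := by
      rw [SimpleGraph.adjMatrix_apply, SimpleGraph.adjMatrix_apply]
      by_cases h : G.Adj i j
      · rw [if_pos h, if_pos h.symm]
      · rw [if_neg h, if_neg (fun hji => h hji.symm)]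
    rw [hA, mul_comm]
  have hsqvM : ∀ t : ℕ, Matrix.vecMul (fun i => Real.sqrt (d i)) ((1 - Lsym)^t)
      = (fun i => Real.sqrt (d i)) := by
    intro t
    conv_lhs => rw [← Matrix.transpose_transpose ((1 - Lsym)^t)]
    rw [Matrix.vecMul_transpose, Matrix.transpose_pow, hMsymm]
    exact hMsqvpow t
  -- vectors
  set gv : Fin N → ℝ := fun i => f i * (Real.sqrt (d i))⁻¹ with hgv
  set psi : Fin N → ℝ := fun i => Real.sqrt (d i) / vol with hpsiv
  set hv : Fin N → ℝ := gv - psi with hhv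
  have hpsiconst : ∀ t : ℕ, Matrix.vecMul psi ((1 - Lsym)^t) = psi := by
    intro t
    have hps : psi = vol⁻¹ • (fun i => Real.sqrt (d i)) := by
      funext i
      rw [hpsiv]
      simp [div_eq_mul_inv, mul_comm]
    rw [hps, Matrix.smul_vecMul, hsqvM t]
  have hfD : Matrix.vecMul f (Matrix.diagonal fun i => (Real.sqrt (d i))⁻¹) = gv :=
    funext fun i => Matrix.vecMul_diagonal _ _ _
  have hkey : ∀ j, Matrix.vecMul f (P ^ s) j - statDist j
      = (Matrix.vecMul hv ((1 - Lsym)^s)) j * Real.sqrt (d j) := by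
    intro j
    have h1 : Matrix.vecMul f (P ^ s) j
        = (Matrix.vecMul gv ((1 - Lsym)^s)) j * Real.sqrt (d j) := by
      rw [hPs, ← Matrix.vecMul_vecMul, ← Matrix.vecMul_vecMul, hfD, Matrix.vecMul_diagonal]
    have h2 : statDist j = (Matrix.vecMul psi ((1 - Lsym)^s)) j * Real.sqrt (d j) := by
      rw [hpsiconst s, hstat]
      show d j / vol = psi j * Real.sqrt (d j)
      rw [hpsiv, div_mul_eq_mul_div, hsq]
    rw [h1, h2, hhv, Matrix.sub_vecMul, Pi.sub_apply]
    ring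
  -- spectral expansion
  set w : Fin N → ℝ := Matrix.vecMul hv U with hw
  have hexp : ∀ j, (Matrix.vecMul hv ((1 - Lsym)^s)) j
      = ∑ k, (w k * (1 - lam k)^s) * U j k := by
    intro j
    rw [hMspow s, ← Matrix.vecMul_vecMul, ← Matrix.vecMul_vecMul]
    rw [show Matrix.vecMul (Matrix.vecMul (Matrix.vecMul hv U)
        (Matrix.diagonal fun k => (1 - lam k)^s)) Uᵀ j
        = ∑ k, (Matrix.vecMul (Matrix.vecMul hv U)
          (Matrix.diagonal fun k => (1 - lam k)^s)) k * Uᵀ k j from by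
      simp [Matrix.vecMul, dotProduct]]
    exact Finset.sum_congr rfl fun k _ => by
      rw [Matrix.vecMul_diagonal, Matrix.transpose_apply, ← hw]
  -- the top eigencomponent vanishes
  have hsum1 : ∑ i, gv i * Real.sqrt (d i) = 1 := by
    rw [← hf1]
    refine Finset.sum_congr rfl fun i _ => ?_
    rw [hgv, mul_assoc, inv_mul_cancel₀ (hsne i), mul_one]
  have hsum2 : ∑ i, psi i * Real.sqrt (d i) = 1 := by
    calc ∑ i, psi i * Real.sqrt (d i) = ∑ i, d i / vol :=
          Finset.sum_congr rfl fun i _ => by rw [hpsiv, div_mul_eq_mul_div, hsq]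
      _ = 1 := by rw [← Finset.sum_div, ← hvol, div_self hvolpos.ne']
  have hvsum : ∑ i, hv i * Real.sqrt (d i) = 0 := by
    simp only [hhv, Pi.sub_apply, sub_mul, Finset.sum_sub_distrib, hsum1, hsum2, sub_self]
  have hw0 : w ⟨0, by omega⟩ = 0 := by
    have hker0 : w ⟨0, by omega⟩ = ∑ i, hv i * (c0 * Real.sqrt (d i)) := by
      rw [hw]
      rw [show Matrix.vecMul hv U ⟨0, by omega⟩ = ∑ i, hv i * U i ⟨0, by omega⟩ from by
        simp [Matrix.vecMul, dotProduct]]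
      exact Finset.sum_congr rfl fun i _ => by rw [hc0]
    rw [hker0]
    calc ∑ i, hv i * (c0 * Real.sqrt (d i)) = c0 * ∑ i, hv i * Real.sqrt (d i) := by
          rw [Finset.mul_sum]; exact Finset.sum_congr rfl fun i _ => by ring
      _ = 0 := by rw [hvsum, mul_zero]
  -- sum of squares estimates
  have hdmaxpos : 0 < dmax := by
    obtain ⟨i, hi⟩ := hdmax.1
    rw [← hi]; exact hsqpos i
  have hdminpos : 0 < dmin := by
    obtain ⟨i, hi⟩ := hdmin.1
    rw [← hi]; exact hsqpos i
  have hS1 : ∑ j, (Matrix.vecMul f (P ^ s) j - statDist j) ^ 2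
      = ∑ j, ((Matrix.vecMul hv ((1 - Lsym)^s)) j)^2 * d j := by
    refine Finset.sum_congr rfl fun j _ => ?_
    rw [hkey j, mul_pow, Real.sq_sqrt (hdpos j).le]
  have hS2 : ∑ j, ((Matrix.vecMul hv ((1 - Lsym)^s)) j)^2 * d j
      ≤ dmax^2 * ∑ j, ((Matrix.vecMul hv ((1 - Lsym)^s)) j)^2 := by
    rw [Finset.mul_sum]
    refine Finset.sum_le_sum fun j _ => ?_
    rw [mul_comm (dmax^2)]
    refine mul_le_mul_of_nonneg_left ?_ (sq_nonneg _)
    calc d j = (Real.sqrt (d j))^2 := (Real.sq_sqrt (hdpos j).le).symm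
      _ ≤ dmax^2 := pow_le_pow_left₀ (Real.sqrt_nonneg _) (hdmax.2 ⟨j, rfl⟩) 2
  have hiso1 : ∑ j, ((Matrix.vecMul hv ((1 - Lsym)^s)) j)^2
      = ∑ k, (w k * (1 - lam k)^s)^2 := by
    set v : Fin N → ℝ := fun k => w k * (1 - lam k)^s with hvdef
    have h1 : ∀ j, (Matrix.vecMul hv ((1 - Lsym)^s)) j = (U *ᵥ v) j := by
      intro j
      rw [hexp j]
      rw [show (U *ᵥ v) j = ∑ k, U j k * v k from by simp [Matrix.mulVec, dotProduct]]
      exact Finset.sum_congr rfl fun k _ => by rw [hvdef, mul_comm]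
    calc ∑ j, ((Matrix.vecMul hv ((1 - Lsym)^s)) j)^2 = ∑ j, (U *ᵥ v) j * (U *ᵥ v) j := by
          refine Finset.sum_congr rfl fun j _ => by rw [h1 j, pow_two]
      _ = (U *ᵥ v) ⬝ᵥ (U *ᵥ v) := rfl
      _ = v ⬝ᵥ v := aux_iso hUtU v
      _ = ∑ k, (w k * (1 - lam k)^s)^2 := by
          refine Finset.sum_congr rfl fun k _ => (pow_two _).symm
  have hdrop : ∑ k, (w k * (1 - lam k)^s)^2 ≤ ((1 - lam')^s)^2 * ∑ k, (w k)^2 := by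
    rw [Finset.mul_sum]
    refine Finset.sum_le_sum fun k _ => ?_
    by_cases hk : k = ⟨0, by omega⟩
    · subst hk
      rw [hw0]
      simp
    · have habk := abs_le.mp (habs k hk)
      have h1 : (1 - lam k)^2 ≤ (1 - lam')^2 := sq_le_sq' (by linarith [habk.1]) habk.2
      calc (w k * (1 - lam k)^s)^2 = (w k)^2 * ((1 - lam k)^2)^s := by
            rw [mul_pow, pow_right_comm]
        _ ≤ (w k)^2 * ((1 - lam')^2)^s :=
            mul_le_mul_of_nonneg_left (pow_le_pow_left₀ (sq_nonneg _) h1 s) (sq_nonneg _)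
        _ = ((1 - lam')^s)^2 * (w k)^2 := by rw [pow_right_comm]; ring
  have hwnorm : ∑ k, (w k)^2 = ∑ i, (hv i)^2 := by
    have hUtt : (Uᵀ)ᵀ * Uᵀ = 1 := by rw [Matrix.transpose_transpose]; exact hU
    have hwm : w = Uᵀ *ᵥ hv := by
      rw [hw]
      conv_lhs => rw [← Matrix.transpose_transpose U]
      rw [Matrix.vecMul_transpose]
    calc ∑ k, (w k)^2 = w ⬝ᵥ w := by
          refine Finset.sum_congr rfl fun k _ => pow_two _
      _ = hv ⬝ᵥ hv := by rw [hwm]; exact aux_iso hUtt hv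
      _ = ∑ i, (hv i)^2 := by
          refine Finset.sum_congr rfl fun i _ => (pow_two _).symm
  have hfle1 : ∀ i, f i ≤ 1 := by
    intro i
    rw [← hf1]
    exact Finset.single_le_sum (fun j _ => hf0 j) (Finset.mem_univ i)
  have hgv2 : ∑ i, (gv i)^2 ≤ (dmin⁻¹)^2 := by
    calc ∑ i, (gv i)^2 ≤ ∑ i, f i * (dmin⁻¹)^2 := by
          refine Finset.sum_le_sum fun i _ => ?_
          simp only [hgv]
          rw [mul_pow]
          have h1 : (f i)^2 ≤ f i := by nlinarith [hf0 i, hfle1 i]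
          have h2 : ((Real.sqrt (d i))⁻¹)^2 ≤ (dmin⁻¹)^2 :=
            pow_le_pow_left₀ (inv_nonneg.mpr (Real.sqrt_nonneg _))
              (inv_anti₀ hdminpos (hdmin.2 ⟨i, rfl⟩)) 2
          refine mul_le_mul h1 h2 (by positivity) (hf0 i)
      _ = (dmin⁻¹)^2 := by rw [← Finset.sum_mul, hf1, one_mul]
  have hgpsi : ∑ i, gv i * psi i = 1 / vol := by
    calc ∑ i, gv i * psi i = ∑ i, f i * (1 / vol) := by
          refine Finset.sum_congr rfl fun i _ => ?_
          simp only [hgv, hpsiv]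
          rw [div_eq_mul_inv, one_div, mul_assoc, ← mul_assoc ((Real.sqrt (d i))⁻¹),
            inv_mul_cancel₀ (hsne i), one_mul]
      _ = 1 / vol := by rw [← Finset.sum_mul, hf1, one_mul]
  have hpsi2 : ∑ i, (psi i)^2 = 1 / vol := by
    calc ∑ i, (psi i)^2 = ∑ i, d i / vol^2 := by
          refine Finset.sum_congr rfl fun i _ => ?_
          simp only [hpsiv]
          rw [div_pow, Real.sq_sqrt (hdpos i).le]
      _ = 1 / vol := by
          rw [← Finset.sum_div, ← hvol, pow_two, ← div_div, div_self hvolpos.ne']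
  have hhnorm : ∑ i, (hv i)^2 ≤ (dmin⁻¹)^2 := by
    have hexpand : ∑ i, (hv i)^2 = ∑ i, (gv i)^2 - 2 * (∑ i, gv i * psi i) + ∑ i, (psi i)^2 := by
      have hterm : ∀ i, (hv i)^2 = gv i^2 - 2 * (gv i * psi i) + psi i^2 := by
        intro i
        simp only [hhv, Pi.sub_apply]
        ring
      simp only [hterm, Finset.sum_add_distrib, Finset.sum_sub_distrib, Finset.mul_sum]
    rw [hexpand, hgpsi, hpsi2]
    have : 0 ≤ 1 / vol := by positivity
    linarith [hgv2]
  -- combine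
  have hSfinal : ∑ j, (Matrix.vecMul f (P ^ s) j - statDist j) ^ 2
      ≤ (dmax * (1 - lam')^s * dmin⁻¹)^2 := by
    calc ∑ j, (Matrix.vecMul f (P ^ s) j - statDist j) ^ 2
        ≤ dmax^2 * ∑ j, ((Matrix.vecMul hv ((1 - Lsym)^s)) j)^2 := by rw [hS1]; exact hS2
      _ = dmax^2 * ∑ k, (w k * (1 - lam k)^s)^2 := by rw [hiso1]
      _ ≤ dmax^2 * (((1 - lam')^s)^2 * ∑ k, (w k)^2) :=
          mul_le_mul_of_nonneg_left hdrop (sq_nonneg _)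
      _ ≤ dmax^2 * (((1 - lam')^s)^2 * (dmin⁻¹)^2) := by
          refine mul_le_mul_of_nonneg_left ?_ (sq_nonneg _)
          refine mul_le_mul_of_nonneg_left ?_ (sq_nonneg _)
          rw [hwnorm]; exact hhnorm
      _ = (dmax * (1 - lam')^s * dmin⁻¹)^2 := by ring
  have hBnn : 0 ≤ dmax * (1 - lam')^s * dmin⁻¹ :=
    mul_nonneg (mul_nonneg hdmaxpos.le (pow_nonneg hgap s)) (inv_nonneg.mpr hdminpos.le)
  have hsqrtle : Real.sqrt (∑ j, (Matrix.vecMul f (P ^ s) j - statDist j) ^ 2)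
      ≤ dmax * (1 - lam')^s * dmin⁻¹ := by
    calc Real.sqrt (∑ j, (Matrix.vecMul f (P ^ s) j - statDist j) ^ 2)
        ≤ Real.sqrt ((dmax * (1 - lam')^s * dmin⁻¹)^2) := Real.sqrt_le_sqrt hSfinal
      _ = dmax * (1 - lam')^s * dmin⁻¹ := Real.sqrt_sq hBnn
  refine hsqrtle.trans ?_
  -- the analytic estimate
  have h1 : (1 - lam')^s ≤ Real.exp (-(lam' * s)) := by
    calc (1 - lam')^s ≤ (Real.exp (-lam'))^s :=
          pow_le_pow_left₀ hgap (by linarith [Real.add_one_le_exp (-lam')]) s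
      _ = Real.exp (-(lam' * s)) := by
          rw [← Real.exp_nat_mul]
          congr 1
          ring
  have hX : 0 < dmax / (eps * dmin) := by positivity
  have h2 : Real.log (dmax / (eps * dmin)) ≤ lam' * s := by
    calc Real.log (dmax / (eps * dmin))
        = lam' * ((1 / lam') * Real.log (dmax / (eps * dmin))) := by field_simp
      _ ≤ lam' * s := mul_le_mul_of_nonneg_left hsge hlam'pos.le
  have h3 : dmax / (eps * dmin) ≤ Real.exp (lam' * s) := by
    calc dmax / (eps * dmin) = Real.exp (Real.log (dmax / (eps * dmin))) :=
          (Real.exp_log hX).symm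
      _ ≤ Real.exp (lam' * s) := Real.exp_le_exp.mpr h2
  have h4 : Real.exp (-(lam' * s)) ≤ eps * dmin / dmax := by
    rw [Real.exp_neg, show eps * dmin / dmax = (dmax / (eps * dmin))⁻¹ from by
      rw [inv_div]]
    exact inv_anti₀ hX h3
  calc dmax * (1 - lam')^s * dmin⁻¹ ≤ dmax * Real.exp (-(lam' * s)) * dmin⁻¹ :=
        mul_le_mul_of_nonneg_right (mul_le_mul_of_nonneg_left h1 hdmaxpos.le)
          (inv_nonneg.mpr hdminpos.le)
    _ ≤ dmax * (eps * dmin / dmax) * dmin⁻¹ :=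
        mul_le_mul_of_nonneg_right (mul_le_mul_of_nonneg_left h4 hdmaxpos.le)
          (inv_nonneg.mpr hdminpos.le)
    _ = eps := by field_simp
end

section
/- Let G be a finite simple undirected connected graph and let κ(i,j) denote the Lin–Lu–Yau Ricci curvature of the edge (i,j). If there exists κ > 0 such that κ(i,j) ≥ κ for every edge (i,j) ∈ E, then the Cheeger constant of G satisfies 2·h_G ≥ κ. -/
open Matrix Finset

/-- L¹ Wasserstein distance between two distributions on the vertices of `G`, with
respect to the shortest-path distance: infimum over couplings `ξ` (nonnegative
functions whose row marginals equal `μ` and column marginals equal `ν`) of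
`Σ_{u,v} d_G(u,v)·ξ(u,v)`. -/
noncomputable def W1dist {N : ℕ} (G : SimpleGraph (Fin N)) (μ ν : Fin N → ℝ) : ℝ :=
  sInf { c : ℝ | ∃ ξ : Fin N → Fin N → ℝ,
    (∀ u v, 0 ≤ ξ u v) ∧ (∀ u, ∑ v, ξ u v = μ u) ∧ (∀ v, ∑ u, ξ u v = ν v) ∧
    c = ∑ u, ∑ v, (G.dist u v : ℝ) * ξ u v }

/-- The α-lazy measure `m_x^α`: mass `α` at `x` and mass `(1−α)/d_x` at each neighbor
of `x`. -/
noncomputable def lazyMeasure {N : ℕ} (G : SimpleGraph (Fin N)) [DecidableRel G.Adj]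
    (α : ℝ) (x : Fin N) : Fin N → ℝ :=
  fun v => if v = x then α else if G.Adj x v then (1 - α) / (G.degree x : ℝ) else 0

/- ### Auxiliary machinery -/

private lemma quad_aux (a b : ℝ) (ha : 0 ≤ a) (h : ∀ t : ℝ, 0 ≤ a * t^2 + 2 * b * t) : b = 0 := by
  by_contra hb
  have h1 : 0 < a + 1 := by linarith
  have h2 := h (-(b / (a+1)))
  have hb2 : 0 < b^2 := by positivity
  have h4 : a * (-(b / (a+1)))^2 + 2 * b * (-(b / (a+1))) = (a * b^2 - 2*b^2*(a+1))/(a+1)^2 := by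
    field_simp; ring
  rw [h4] at h2
  have h5 : (0:ℝ) < (a+1)^2 := by positivity
  have h7 := mul_nonneg h2 h5.le
  rw [div_mul_cancel₀ _ (by positivity : ((a:ℝ)+1)^2 ≠ 0)] at h7
  nlinarith

private lemma walk_bound {N : ℕ} {G : SimpleGraph (Fin N)} (f : Fin N → ℝ) (M : ℝ)
    (hM : ∀ a b, G.Adj a b → |f a - f b| ≤ M) :
    ∀ {u v : Fin N} (p : G.Walk u v), |f u - f v| ≤ M * p.length := by
  intro u v p
  induction p with
  | nil => simp
  | @cons u w v h p ih =>
    have h1 := hM _ _ h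
    have h2 : |f u - f v| ≤ |f u - f w| + |f w - f v| := by
      calc |f u - f v| = |(f u - f w) + (f w - f v)| := by ring_nf
        _ ≤ |f u - f w| + |f w - f v| := abs_add_le _ _
    rw [SimpleGraph.Walk.length_cons]
    push_cast
    linarith

/-- The Dirichlet energy `∑_{u,v} A(u,v) (f u - f v)²`. -/
noncomputable def qE {N : ℕ} (G : SimpleGraph (Fin N)) [DecidableRel G.Adj] (f : Fin N → ℝ) : ℝ :=
  ∑ u, ∑ v, (G.adjMatrix ℝ) u v * (f u - f v)^2

/-- The associated bilinear form. -/
noncomputable def qB {N : ℕ} (G : SimpleGraph (Fin N)) [DecidableRel G.Adj] (f g : Fin N → ℝ) : ℝ :=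
  ∑ u, ∑ v, (G.adjMatrix ℝ) u v * (f u - f v) * (g u - g v)

lemma adjM_nonneg {N : ℕ} (G : SimpleGraph (Fin N)) [DecidableRel G.Adj] (u v : Fin N) :
    0 ≤ (G.adjMatrix ℝ) u v := by
  rw [SimpleGraph.adjMatrix_apply]; split <;> norm_num

lemma qE_nonneg {N : ℕ} (G : SimpleGraph (Fin N)) [DecidableRel G.Adj] (f : Fin N → ℝ) :
    0 ≤ qE G f :=
  Finset.sum_nonneg fun u _ => Finset.sum_nonneg fun v _ =>
    mul_nonneg (adjM_nonneg G u v) (sq_nonneg _)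

lemma qE_expand {N : ℕ} (G : SimpleGraph (Fin N)) [DecidableRel G.Adj] (f g : Fin N → ℝ) (t : ℝ) :
    qE G (fun i => f i + t * g i) = qE G f + 2 * t * qB G f g + t^2 * qE G g := by
  unfold qE qB
  have key : ∀ u v : Fin N, (G.adjMatrix ℝ) u v * ((f u + t * g u) - (f v + t * g v))^2
      = (G.adjMatrix ℝ) u v * (f u - f v)^2
        + (2*t) * ((G.adjMatrix ℝ) u v * (f u - f v) * (g u - g v))
        + t^2 * ((G.adjMatrix ℝ) u v * (g u - g v)^2) := by
    intro u v; ring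
  simp_rw [key, Finset.sum_add_distrib, ← Finset.mul_sum]

lemma qB_shift {N : ℕ} (G : SimpleGraph (Fin N)) [DecidableRel G.Adj] (f g : Fin N → ℝ) (c : ℝ) :
    qB G f (fun i => g i - c) = qB G f g := by
  unfold qB; congr 1; ext u; congr 1; ext v; ring

lemma qN_expand {N : ℕ} (d f g : Fin N → ℝ) (t : ℝ) :
    ∑ i, d i * (f i + t * g i)^2
      = ∑ i, d i * f i^2 + 2*t*(∑ i, d i * f i * g i) + t^2 * ∑ i, d i * g i^2 := by
  have key : ∀ i, d i * (f i + t * g i)^2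
      = d i * f i^2 + (2*t) * (d i * f i * g i) + t^2 * (d i * g i^2) := by intro i; ring
  simp_rw [key, Finset.sum_add_distrib, ← Finset.mul_sum]

lemma qE_scale {N : ℕ} (G : SimpleGraph (Fin N)) [DecidableRel G.Adj] (f : Fin N → ℝ) (c : ℝ) :
    qE G (fun i => c * f i) = c^2 * qE G f := by
  unfold qE
  rw [Finset.mul_sum]
  congr 1; ext u
  rw [Finset.mul_sum]
  congr 1; ext v
  ring

lemma K_compact {N : ℕ} (d : Fin N → ℝ) (hdpos : ∀ i, 0 < d i) :
    IsCompact {f : Fin N → ℝ | ∑ i, d i * f i = 0 ∧ ∑ i, d i * f i^2 = 1} := by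
  have hc1 : Continuous fun f : Fin N → ℝ => ∑ i, d i * f i :=
    continuous_finset_sum _ fun i _ => (continuous_const.mul (continuous_apply i))
  have hc2 : Continuous fun f : Fin N → ℝ => ∑ i, d i * f i^2 :=
    continuous_finset_sum _ fun i _ => (continuous_const.mul ((continuous_apply i).pow 2))
  apply Metric.isCompact_of_isClosed_isBounded
  · exact (isClosed_eq hc1 continuous_const).inter (isClosed_eq hc2 continuous_const)
  · rw [Metric.isBounded_iff_subset_closedBall 0]
    refine ⟨1 + ∑ j, 1 / d j, ?_⟩
    rintro f ⟨-, hf2⟩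
    rw [Metric.mem_closedBall, dist_zero_right]
    have hR : ∀ i, ‖f i‖ ≤ 1 + ∑ j, 1 / d j := by
      intro i
      have h1 : d i * f i ^ 2 ≤ 1 := by
        rw [← hf2]
        exact Finset.single_le_sum (fun j _ => mul_nonneg (hdpos j).le (sq_nonneg _))
          (Finset.mem_univ i)
      have h2 : f i ^ 2 ≤ 1 / d i := by
        rw [le_div_iff₀ (hdpos i)]; linarith
      have h3 : 1 / d i ≤ ∑ j, 1 / d j :=
        Finset.single_le_sum (f := fun j => 1 / d j)
          (fun j _ => le_of_lt (by exact div_pos one_pos (hdpos j))) (Finset.mem_univ i)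
      have h4 : |f i| ≤ 1 + f i ^ 2 := by nlinarith [abs_nonneg (f i), sq_abs (f i)]
      rw [Real.norm_eq_abs]
      linarith
    have hRnn : (0:ℝ) ≤ 1 + ∑ j, 1 / d j := by
      have : (0:ℝ) ≤ ∑ j, 1 / d j :=
        Finset.sum_nonneg fun j _ => le_of_lt (div_pos one_pos (hdpos j))
      linarith
    exact pi_norm_le_iff_of_nonneg hRnn |>.mpr hR

lemma row_sum_F {N : ℕ} (G : SimpleGraph (Fin N)) [DecidableRel G.Adj] (x : Fin N) (F : Fin N → ℝ) :
    ∑ v, (G.adjMatrix ℝ) x v * F v = ∑ v ∈ G.neighborFinset x, F v := by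
  rw [SimpleGraph.neighborFinset_eq_filter, Finset.sum_filter]
  congr 1; ext v
  rw [SimpleGraph.adjMatrix_apply]
  split <;> simp

lemma row_sum {N : ℕ} (G : SimpleGraph (Fin N)) [DecidableRel G.Adj] (x : Fin N) :
    ∑ v, (G.adjMatrix ℝ) x v = (G.degree x : ℝ) := by
  have := row_sum_F G x (fun _ => 1)
  simpa [SimpleGraph.card_neighborFinset_eq_degree] using this

lemma lazy_pair {N : ℕ} (G : SimpleGraph (Fin N)) [DecidableRel G.Adj] (α : ℝ) (x : Fin N)
    (F : Fin N → ℝ) :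
    ∑ v, F v * lazyMeasure G α x v
      = α * F x + (1 - α) / (G.degree x : ℝ) * ∑ v, (G.adjMatrix ℝ) x v * F v := by
  have key : ∀ v, F v * lazyMeasure G α x v
      = (if v = x then α * F v else 0)
        + (1 - α) / (G.degree x : ℝ) * ((G.adjMatrix ℝ) x v * F v) := by
    intro v
    by_cases h1 : v = x
    · subst h1
      simp [lazyMeasure, SimpleGraph.adjMatrix_apply, G.irrefl]
      ring
    · simp only [lazyMeasure, if_neg h1, SimpleGraph.adjMatrix_apply]
      by_cases h2 : G.Adj x v <;> simp [h2] <;> ring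
  rw [Finset.sum_congr rfl (fun v _ => key v), Finset.sum_add_distrib, ← Finset.mul_sum,
    Finset.sum_ite_eq' Finset.univ x (fun v => α * F v)]
  simp

lemma lazy_sum_one {N : ℕ} (G : SimpleGraph (Fin N)) [DecidableRel G.Adj] (α : ℝ) (x : Fin N)
    (hx : 0 < G.degree x) :
    ∑ v, lazyMeasure G α x v = 1 := by
  have := lazy_pair G α x (fun _ => 1)
  simp only [one_mul, mul_one] at this
  rw [this, row_sum]
  field_simp
  ring

lemma lazy_nonneg {N : ℕ} (G : SimpleGraph (Fin N)) [DecidableRel G.Adj] {α : ℝ} (x : Fin N)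
    (h0 : 0 ≤ α) (h1 : α ≤ 1) (v : Fin N) : 0 ≤ lazyMeasure G α x v := by
  unfold lazyMeasure
  split
  · exact h0
  split
  · apply div_nonneg (by linarith) (Nat.cast_nonneg _)
  · exact le_refl _

lemma W1_lower {N : ℕ} (G : SimpleGraph (Fin N)) (μ ν F : Fin N → ℝ)
    (hμ0 : ∀ u, 0 ≤ μ u) (hν0 : ∀ v, 0 ≤ ν v)
    (hμ1 : ∑ u, μ u = 1) (hν1 : ∑ v, ν v = 1)
    (hF : ∀ u v, F u - F v ≤ (G.dist u v : ℝ)) :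
    (∑ u, F u * μ u) - (∑ v, F v * ν v) ≤ W1dist G μ ν := by
  apply le_csInf
  · refine ⟨∑ u, ∑ v, (G.dist u v : ℝ) * (μ u * ν v), fun u v => μ u * ν v, ?_, ?_, ?_, rfl⟩
    · exact fun u v => mul_nonneg (hμ0 u) (hν0 v)
    · intro u; rw [← Finset.mul_sum, hν1, mul_one]
    · intro v; rw [← Finset.sum_mul, hμ1, one_mul]
  · rintro c ⟨ξ, hξ0, hrow, hcol, rfl⟩
    have e1 : ∑ u, F u * μ u = ∑ u, ∑ v, F u * ξ u v := by
      congr 1; ext u; rw [← Finset.mul_sum, hrow]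
    have e2 : ∑ v, F v * ν v = ∑ u, ∑ v, F v * ξ u v := by
      rw [Finset.sum_comm]
      congr 1; ext v; rw [← Finset.mul_sum, hcol]
    rw [e1, e2, ← Finset.sum_sub_distrib]
    apply Finset.sum_le_sum
    intro u _
    rw [← Finset.sum_sub_distrib]
    apply Finset.sum_le_sum
    intro v _
    rw [← sub_mul]
    exact mul_le_mul_of_nonneg_right (hF u v) (hξ0 u v)

lemma lin_expand {N : ℕ} (d f g : Fin N → ℝ) (t : ℝ) :
    ∑ i, d i * (f i + t * g i) = ∑ i, d i * f i + t * ∑ i, d i * g i := by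
  have key : ∀ i, d i * (f i + t * g i) = d i * f i + t * (d i * g i) := by intro i; ring
  simp_rw [key, Finset.sum_add_distrib, ← Finset.mul_sum]

lemma scale_sum {N : ℕ} (d v : Fin N → ℝ) (c : ℝ) :
    ∑ i, d i * (c * v i) = c * ∑ i, d i * v i := by
  have key : ∀ i, d i * (c * v i) = c * (d i * v i) := by intro i; ring
  simp_rw [key, ← Finset.mul_sum]

lemma scale_sq_sum {N : ℕ} (d v : Fin N → ℝ) (c : ℝ) :
    ∑ i, d i * (c * v i)^2 = c^2 * ∑ i, d i * v i^2 := by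
  have key : ∀ i, d i * (c * v i)^2 = c^2 * (d i * v i^2) := by intro i; ring
  simp_rw [key, ← Finset.mul_sum]
lemma exists_eigen {N : ℕ} (hN : 1 < N) (G : SimpleGraph (Fin N)) [DecidableRel G.Adj]
    (d : Fin N → ℝ) (hd : ∀ i, d i = (G.degree i : ℝ)) (hdpos : ∀ i, 0 < d i) :
    ∃ (f : Fin N → ℝ) (Λ : ℝ), 0 ≤ Λ ∧
      (∑ i, d i * f i = 0) ∧ (∑ i, d i * f i ^ 2 = 1) ∧
      (∀ g : Fin N → ℝ, ∑ i, d i * g i = 0 → Λ * (∑ i, d i * g i^2) ≤ qE G g) ∧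
      (∀ x, ∑ v, (G.adjMatrix ℝ) x v * f v = (1 - Λ/2) * (d x * f x)) := by
  classical
  set K : Set (Fin N → ℝ) := {f | ∑ i, d i * f i = 0 ∧ ∑ i, d i * f i^2 = 1} with hK
  -- normalization
  have hnorm : ∀ v : Fin N → ℝ, ∑ i, d i * v i = 0 → 0 < ∑ i, d i * v i^2 →
      (fun i => (Real.sqrt (∑ i, d i * v i^2))⁻¹ * v i) ∈ K := by
    intro v h0 hp
    have hs : 0 < Real.sqrt (∑ i, d i * v i^2) := Real.sqrt_pos.mpr hp
    constructor
    · rw [scale_sum, h0, mul_zero]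
    · rw [scale_sq_sum]
      rw [show ((Real.sqrt (∑ i, d i * v i^2))⁻¹)^2 = ((Real.sqrt (∑ i, d i * v i^2))^2)⁻¹ by
        rw [inv_pow]]
      rw [Real.sq_sqrt hp.le]
      field_simp
  -- K nonempty
  have hKne : K.Nonempty := by
    set a : Fin N := ⟨0, by omega⟩
    set b : Fin N := ⟨1, by omega⟩
    have hab : a ≠ b := by simp [a, b, Fin.ext_iff]
    set g0 : Fin N → ℝ := fun i =>
      (if i = a then 1 / d a else 0) + (if i = b then -(1 / d b) else 0) with hg0
    have hmean : ∑ i, d i * g0 i = 0 := by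
      have key : ∀ i, d i * g0 i
          = (if i = a then d i * (1 / d a) else 0) + (if i = b then d i * (-(1 / d b)) else 0) := by
        intro i; simp only [hg0, mul_add, mul_ite, mul_zero]
      simp_rw [key, Finset.sum_add_distrib, Finset.sum_ite_eq' Finset.univ a,
        Finset.sum_ite_eq' Finset.univ b]
      have := (hdpos a).ne'
      have := (hdpos b).ne'
      simp only [Finset.mem_univ, if_true]
      field_simp
      norm_num
    have hsq : ∑ i, d i * g0 i ^2 = 1 / d a + 1 / d b := by
      have key : ∀ i, d i * g0 i ^ 2
          = (if i = a then d i * (1 / d a)^2 else 0) + (if i = b then d i * (1 / d b)^2 else 0) := by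
        intro i
        by_cases h1 : i = a
        · subst h1
          simp only [hg0, if_pos rfl, if_neg hab, eq_self_iff_true, if_true]
          ring
        · by_cases h2 : i = b
          · subst h2
            simp only [hg0, if_neg (Ne.symm hab), if_pos rfl, if_neg h1, eq_self_iff_true, if_true]
            ring
          · simp [hg0, h1, h2]
      simp_rw [key, Finset.sum_add_distrib, Finset.sum_ite_eq' Finset.univ a,
        Finset.sum_ite_eq' Finset.univ b]
      have ha' := (hdpos a).ne'
      have hb' := (hdpos b).ne'
      simp only [Finset.mem_univ, if_true]
      field_simp
    have hpos : 0 < ∑ i, d i * g0 i ^2 := by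
      rw [hsq]
      have := hdpos a; have := hdpos b
      positivity
    exact ⟨_, hnorm g0 hmean hpos⟩
  -- continuity
  have hcont : Continuous (qE G) := by
    apply continuous_finset_sum
    intro u _
    apply continuous_finset_sum
    intro v _
    exact continuous_const.mul (((continuous_apply u).sub (continuous_apply v)).pow 2)
  obtain ⟨f, hfK, hfmin⟩ := (K_compact d hdpos).exists_isMinOn hKne hcont.continuousOn
  obtain ⟨hf0, hf1⟩ := hfK
  set Λ := qE G f with hΛ
  have claim : ∀ v : Fin N → ℝ, ∑ i, d i * v i = 0 →
      Λ * (∑ i, d i * v i^2) ≤ qE G v := by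
    intro v hv
    have hNv : 0 ≤ ∑ i, d i * v i ^2 :=
      Finset.sum_nonneg fun i _ => mul_nonneg (hdpos i).le (sq_nonneg _)
    rcases hNv.eq_or_lt with h | h
    · rw [← h, mul_zero]; exact qE_nonneg G v
    · have hw := hnorm v hv h
      have hmin : qE G f ≤ qE G (fun i => (Real.sqrt (∑ i, d i * v i^2))⁻¹ * v i) := hfmin hw
      rw [qE_scale, inv_pow, Real.sq_sqrt h.le, ← hΛ] at hmin
      calc Λ * (∑ i, d i * v i^2) ≤ ((∑ i, d i * v i^2)⁻¹ * qE G v) * (∑ i, d i * v i^2) := by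
            apply mul_le_mul_of_nonneg_right hmin hNv
        _ = qE G v := by field_simp
  refine ⟨f, Λ, hΛ ▸ qE_nonneg G f, hf0, hf1, claim, ?_⟩
  -- Euler–Lagrange
  · -- first for mean-zero g
    have hEL0 : ∀ g : Fin N → ℝ, ∑ i, d i * g i = 0 →
        qB G f g = Λ * ∑ i, d i * f i * g i := by
      intro g hg
      set a : ℝ := qE G g - Λ * ∑ i, d i * g i^2 with haa
      set b : ℝ := qB G f g - Λ * ∑ i, d i * f i * g i with hbb
      have ha : 0 ≤ a := by
        have := claim g hg
        simp only [haa]; linarith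
      have hq : ∀ t : ℝ, 0 ≤ a * t^2 + 2 * b * t := by
        intro t
        have hmz : ∑ i, d i * (f i + t * g i) = 0 := by
          rw [lin_expand, hf0, hg]; ring
        have := claim (fun i => f i + t * g i) hmz
        rw [qE_expand, qN_expand, hf1] at this
        simp only [haa, hbb]
        nlinarith [this]
      have hb0 := quad_aux a b ha hq
      simp only [hbb] at hb0
      linarith
    -- now for every g by shifting
    have hEL : ∀ g : Fin N → ℝ, qB G f g = Λ * ∑ i, d i * f i * g i := by
      intro g
      have hdsum : 0 < ∑ i, d i := by
        apply Finset.sum_pos (fun i _ => hdpos i)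
        exact ⟨⟨0, by omega⟩, Finset.mem_univ _⟩
      set c : ℝ := (∑ i, d i * g i) / (∑ i, d i) with hc
      have hmz : ∑ i, d i * (g i - c) = 0 := by
        have key : ∀ i, d i * (g i - c) = d i * g i - c * d i := by intro i; ring
        simp_rw [key, Finset.sum_sub_distrib, ← Finset.mul_sum, hc]
        field_simp
        ring
      have h1 := hEL0 (fun i => g i - c) hmz
      rw [qB_shift] at h1
      have h2 : ∑ i, d i * f i * (g i - c) = ∑ i, d i * f i * g i := by
        have key : ∀ i, d i * f i * (g i - c) = d i * f i * g i - c * (d i * f i) := by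
          intro i; ring
        simp_rw [key, Finset.sum_sub_distrib, ← Finset.mul_sum, hf0]
        ring
      rw [h2] at h1
      exact h1
    -- instantiate with indicator
    intro x
    have hsym : ∀ u v : Fin N, (G.adjMatrix ℝ) u v = (G.adjMatrix ℝ) v u := by
      intro u v; simp [SimpleGraph.adjMatrix_apply, SimpleGraph.adj_comm]
    have h1 := hEL (fun i => if i = x then (1:ℝ) else 0)
    have hrhs : ∑ i, d i * f i * (if i = x then (1:ℝ) else 0) = d x * f x := by
      have key : ∀ i, d i * f i * (if i = x then (1:ℝ) else 0)
          = if i = x then d i * f i else 0 := by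
        intro i; split <;> ring
      simp_rw [key]
      rw [Finset.sum_ite_eq' Finset.univ x]
      simp
    have hlhs : qB G f (fun i => if i = x then (1:ℝ) else 0)
        = 2 * ∑ v, (G.adjMatrix ℝ) x v * (f x - f v) := by
      unfold qB
      have key : ∀ u v : Fin N, (G.adjMatrix ℝ) u v * (f u - f v)
            * ((if u = x then (1:ℝ) else 0) - (if v = x then (1:ℝ) else 0))
          = (if u = x then (G.adjMatrix ℝ) u v * (f u - f v) else 0)
            + (if v = x then -((G.adjMatrix ℝ) u v * (f u - f v)) else 0) := by
        intro u v
        by_cases h1 : u = x <;> by_cases h2 : v = x <;> simp [h1, h2] <;> ring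
      simp_rw [key, Finset.sum_add_distrib]
      have e1 : ∀ u : Fin N, ∑ v, (if u = x then (G.adjMatrix ℝ) u v * (f u - f v) else 0)
          = if u = x then ∑ v, (G.adjMatrix ℝ) u v * (f u - f v) else 0 := by
        intro u; split <;> simp
      simp_rw [e1]
      rw [Finset.sum_ite_eq' Finset.univ x]
      have e2 : ∀ u : Fin N, ∑ v, (if v = x then -((G.adjMatrix ℝ) u v * (f u - f v)) else 0)
          = -((G.adjMatrix ℝ) u x * (f u - f x)) := by
        intro u
        rw [Finset.sum_ite_eq' Finset.univ x]
        simp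
      simp_rw [e2]
      have e3 : ∀ u : Fin N, -((G.adjMatrix ℝ) u x * (f u - f x))
          = (G.adjMatrix ℝ) x u * (f x - f u) := by
        intro u; rw [hsym u x]; ring
      simp_rw [e3]
      simp only [Finset.mem_univ, if_true]
      ring
    rw [hlhs, hrhs] at h1
    have hrow : ∑ v, (G.adjMatrix ℝ) x v * (f x - f v)
        = d x * f x - ∑ v, (G.adjMatrix ℝ) x v * f v := by
      have key : ∀ v, (G.adjMatrix ℝ) x v * (f x - f v)
          = (G.adjMatrix ℝ) x v * f x - (G.adjMatrix ℝ) x v * f v := by intro v; ring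
      simp_rw [key, Finset.sum_sub_distrib, ← Finset.sum_mul, row_sum, hd x]
    rw [hrow] at h1
    linarith

set_option maxHeartbeats 1000000 in
/-- Corollary 1: if the Lin–Lu–Yau Ricci curvature
`κ(x,y) = lim_{α→1⁻} (1 − W₁(m_x^α, m_y^α))/(1−α)` satisfies `κ(i,j) ≥ κ > 0` on every
edge of a finite simple undirected connected graph, then the Cheeger constant
satisfies `2·h_G ≥ κ`. -/
theorem stmt_5
    {N : ℕ} (hN : 1 < N)
    (G : SimpleGraph (Fin N)) [DecidableRel G.Adj]
    (hconn : G.Connected)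
    -- degrees
    (d : Fin N → ℝ)
    (hd : ∀ i, d i = (G.degree i : ℝ))
    (hdpos : ∀ i, 0 < d i)
    -- Cheeger constant: h_G = min over proper nonempty S of |∂S| / min(vol S, vol Sᶜ)
    (hG : ℝ)
    (hCheeger : IsLeast
      ((fun S : Finset (Fin N) =>
          (∑ u ∈ S, ∑ v ∈ Sᶜ, (G.adjMatrix ℝ) u v) /
            min (∑ i ∈ S, d i) (∑ i ∈ Sᶜ, d i)) ''
        {S : Finset (Fin N) | S.Nonempty ∧ S ≠ Finset.univ}) hG)
    -- Lin–Lu–Yau Ricci curvature: the limit as α → 1⁻ of κ_α(x,y)/(1−α)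
    (ricci : Fin N → Fin N → ℝ)
    (hricci : ∀ x y, G.Adj x y →
      Filter.Tendsto
        (fun α : ℝ =>
          (1 - W1dist G (lazyMeasure G α x) (lazyMeasure G α y)) / (1 - α))
        (nhdsWithin 1 (Set.Iio 1)) (nhds (ricci x y)))
    -- positive lower bound on the curvature of every edge
    (κ : ℝ) (hκ : 0 < κ)
    (hbound : ∀ i j, G.Adj i j → κ ≤ ricci i j) :
    2 * hG ≥ κ := by
  classical
  obtain ⟨f, Λ, hΛnn, hf0, hf1, hmin, heig⟩ := exists_eigen hN G d hd hdpos
  have hsym : ∀ u v : Fin N, (G.adjMatrix ℝ) u v = (G.adjMatrix ℝ) v u := by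
    intro u v; simp [SimpleGraph.adjMatrix_apply, SimpleGraph.adj_comm]
  -- ### Part 1 : Λ ≤ 4 h_G via the Cheeger test function
  obtain ⟨S, ⟨hSne, hSuniv⟩, hSval⟩ := hCheeger.1
  set volS := ∑ i ∈ S, d i with hvolS
  set volSc := ∑ i ∈ Sᶜ, d i with hvolSc
  set B := ∑ u ∈ S, ∑ v ∈ Sᶜ, (G.adjMatrix ℝ) u v with hB
  have hSval' : B / min volS volSc = hG := hSval
  have hScne : Sᶜ.Nonempty := by
    by_contra h
    rw [Finset.not_nonempty_iff_eq_empty] at h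
    exact hSuniv ((Finset.compl_eq_empty_iff S).mp h)
  have hvolSpos : 0 < volS := Finset.sum_pos (fun i _ => hdpos i) hSne
  have hvolScpos : 0 < volSc := Finset.sum_pos (fun i _ => hdpos i) hScne
  have hvolV : ∑ i, d i = volS + volSc := (Finset.sum_add_sum_compl S d).symm
  have hBnn : 0 ≤ B :=
    Finset.sum_nonneg fun u _ => Finset.sum_nonneg fun v _ => adjM_nonneg G u v
  set p : ℝ := volS / (volS + volSc) with hp
  set gS : Fin N → ℝ := fun i => (if i ∈ S then (1:ℝ) else 0) - p with hgS
  have hchi : ∑ i, d i * (if i ∈ S then (1:ℝ) else 0) = volS := by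
    have key : ∀ i, d i * (if i ∈ S then (1:ℝ) else 0) = (if i ∈ S then d i else 0) := by
      intro i; split <;> ring
    simp_rw [key]
    rw [Fintype.sum_ite_mem]
  have hgmean : ∑ i, d i * gS i = 0 := by
    have key : ∀ i, d i * gS i = d i * (if i ∈ S then (1:ℝ) else 0) - p * d i := by
      intro i; simp only [hgS]; ring
    simp_rw [key, Finset.sum_sub_distrib, ← Finset.mul_sum, hchi, hvolV, hp]
    have : volS + volSc ≠ 0 := by positivity
    field_simp
    ring
  have hgN : ∑ i, d i * gS i ^ 2 = volS - 2 * p * volS + p^2 * (volS + volSc) := by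
    have key : ∀ i, d i * gS i ^ 2
        = d i * (if i ∈ S then (1:ℝ) else 0) - 2 * p * (d i * (if i ∈ S then (1:ℝ) else 0))
          + p^2 * d i := by
      intro i; simp only [hgS]; split <;> ring
    simp_rw [key]
    rw [Finset.sum_add_distrib, Finset.sum_sub_distrib, ← Finset.mul_sum, ← Finset.mul_sum,
      hchi, hvolV]
  have hgE : qE G gS = 2 * B := by
    unfold qE
    have key : ∀ u v : Fin N, (G.adjMatrix ℝ) u v * (gS u - gS v)^2
        = (if u ∈ S then (if v ∈ Sᶜ then (G.adjMatrix ℝ) u v else 0) else 0)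
          + (if v ∈ S then (if u ∈ Sᶜ then (G.adjMatrix ℝ) u v else 0) else 0) := by
      intro u v
      by_cases hu : u ∈ S <;> by_cases hv : v ∈ S <;>
        simp [hgS, hu, hv, Finset.mem_compl] <;> ring
    calc ∑ u, ∑ v, (G.adjMatrix ℝ) u v * (gS u - gS v)^2
        = ∑ u, ∑ v, ((if u ∈ S then (if v ∈ Sᶜ then (G.adjMatrix ℝ) u v else 0) else 0)
            + (if v ∈ S then (if u ∈ Sᶜ then (G.adjMatrix ℝ) u v else 0) else 0)) :=
          Finset.sum_congr rfl fun u _ => Finset.sum_congr rfl fun v _ => key u v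
      _ = (∑ u, ∑ v, (if u ∈ S then (if v ∈ Sᶜ then (G.adjMatrix ℝ) u v else 0) else 0))
          + (∑ u, ∑ v, (if v ∈ S then (if u ∈ Sᶜ then (G.adjMatrix ℝ) u v else 0) else 0)) := by
          simp_rw [Finset.sum_add_distrib]
      _ = B + B := by
          congr 1
          · rw [hB]
            rw [show (∑ u, ∑ v, (if u ∈ S then (if v ∈ Sᶜ then (G.adjMatrix ℝ) u v else 0) else 0))
                = ∑ u, (if u ∈ S then ∑ v, (if v ∈ Sᶜ then (G.adjMatrix ℝ) u v else 0) else 0) from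
              Finset.sum_congr rfl fun u _ => by split <;> simp]
            rw [Fintype.sum_ite_mem]
            exact Finset.sum_congr rfl fun u _ => Fintype.sum_ite_mem _ _
          · rw [hB, Finset.sum_comm]
            rw [show (∑ v, ∑ u, (if v ∈ S then (if u ∈ Sᶜ then (G.adjMatrix ℝ) u v else 0) else 0))
                = ∑ v, (if v ∈ S then ∑ u, (if u ∈ Sᶜ then (G.adjMatrix ℝ) u v else 0) else 0) from
              Finset.sum_congr rfl fun v _ => by split <;> simp]
            rw [Fintype.sum_ite_mem]
            refine Finset.sum_congr rfl fun v _ => ?_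
            rw [Fintype.sum_ite_mem]
            exact Finset.sum_congr rfl fun u _ => hsym u v
      _ = 2 * B := by ring
  have hcheegS := hmin gS hgmean
  rw [hgN, hgE] at hcheegS
  have hV : (0:ℝ) < volS + volSc := by linarith
  have hid : volS - 2*p*volS + p^2*(volS+volSc) = volS * volSc / (volS + volSc) := by
    rw [hp]; field_simp; ring
  rw [hid] at hcheegS
  have hcheegS2 : Λ * (volS * volSc) ≤ 2 * B * (volS + volSc) := by
    have h := mul_le_mul_of_nonneg_right hcheegS hV.le
    have e : Λ * (volS * volSc / (volS + volSc)) * (volS + volSc) = Λ * (volS * volSc) := by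
      field_simp
    rw [e] at h
    linarith
  have hminpos : 0 < min volS volSc := lt_min hvolSpos hvolScpos
  have hkey : Λ * min volS volSc ≤ 4 * B := by
    rcases le_total volS volSc with hc | hc
    · rw [min_eq_left hc]
      nlinarith [hcheegS2, mul_nonneg hBnn (sub_nonneg.mpr hc), hvolScpos]
    · rw [min_eq_right hc]
      nlinarith [hcheegS2, mul_nonneg hBnn (sub_nonneg.mpr hc), hvolSpos]
  have hΛ4 : Λ ≤ 4 * hG := by
    rw [← hSval', show (4:ℝ) * (B / min volS volSc) = (4*B)/(min volS volSc) by ring,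
      le_div_iff₀ hminpos]
    linarith
  -- ### Part 2 : κ ≤ Λ/2 via the maximal-gradient edge
  set v0 : Fin N := ⟨0, by omega⟩ with hv0
  have hdegpos : ∀ x : Fin N, 0 < G.degree x := by
    intro x
    have h := hdpos x; rw [hd x] at h
    exact_mod_cast h
  set P : Finset (Fin N × Fin N) := Finset.univ.filter (fun q => G.Adj q.1 q.2) with hP
  have hPne : P.Nonempty := by
    have hdeg := hdegpos v0
    rw [← SimpleGraph.card_neighborFinset_eq_degree] at hdeg
    obtain ⟨y, hy⟩ := Finset.card_pos.mp hdeg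
    rw [SimpleGraph.mem_neighborFinset] at hy
    exact ⟨(v0, y), by simp [hP, hy]⟩
  set M := P.sup' hPne (fun q => f q.1 - f q.2) with hM
  have hMedge : ∀ a b, G.Adj a b → f a - f b ≤ M := by
    intro a b hab
    exact Finset.le_sup' (f := fun q : Fin N × Fin N => f q.1 - f q.2)
      (by simp [hP, hab] : (a, b) ∈ P)
  have habs : ∀ a b, G.Adj a b → |f a - f b| ≤ M := by
    intro a b hab
    rw [abs_le]
    exact ⟨by have := hMedge b a hab.symm; linarith, hMedge a b hab⟩
  have hLip : ∀ u v, |f u - f v| ≤ M * (G.dist u v : ℝ) := by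
    intro u v
    obtain ⟨pw, hpw⟩ := hconn.exists_walk_length_eq_dist u v
    rw [← hpw]
    exact_mod_cast walk_bound f M habs pw
  have hMpos : 0 < M := by
    by_contra hnot
    push_neg at hnot
    have hconst : ∀ i, f i = f v0 := by
      intro i
      have h1 := hLip i v0
      have h2 : M * (G.dist i v0 : ℝ) ≤ 0 :=
        mul_nonpos_iff.mpr (Or.inr ⟨hnot, Nat.cast_nonneg _⟩)
      have h3 : |f i - f v0| = 0 := le_antisymm (h1.trans h2) (abs_nonneg _)
      have h4 := abs_eq_zero.mp h3
      linarith
    have hVp : 0 < ∑ i, d i := Finset.sum_pos (fun i _ => hdpos i) ⟨v0, Finset.mem_univ _⟩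
    have hsum : ∑ i, d i * f i = (∑ i, d i) * f v0 := by
      rw [Finset.sum_mul]
      exact Finset.sum_congr rfl fun i _ => by rw [hconst i]
    have hf00 : f v0 = 0 := by
      rw [hsum] at hf0
      rcases mul_eq_zero.mp hf0 with h | h
      · exact absurd h hVp.ne'
      · exact h
    have hzero : ∑ i, d i * f i ^2 = 0 := by
      apply Finset.sum_eq_zero
      intro i _
      rw [hconst i, hf00]
      ring
    rw [hf1] at hzero
    norm_num at hzero
  obtain ⟨⟨x, y⟩, hmem, hMeq⟩ :=
    Finset.exists_mem_eq_sup' hPne (fun q : Fin N × Fin N => f q.1 - f q.2)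
  have hadj : G.Adj x y := by
    have := hmem
    rw [hP, Finset.mem_filter] at this
    exact this.2
  have hMxy : f x - f y = M := by rw [hM, hMeq]
  set F : Fin N → ℝ := fun i => f i / M with hF
  have hFxy : F x - F y = 1 := by
    simp only [hF]
    rw [div_sub_div_same, hMxy, div_self hMpos.ne']
  have hFLip : ∀ u v, F u - F v ≤ (G.dist u v : ℝ) := by
    intro u v
    have e : F u - F v = (f u - f v) / M := by
      simp only [hF]
      rw [div_sub_div_same]
    rw [e, div_le_iff₀ hMpos]
    calc f u - f v ≤ |f u - f v| := le_abs_self _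
      _ ≤ M * (G.dist u v : ℝ) := hLip u v
      _ = (G.dist u v : ℝ) * M := mul_comm _ _
  have heigF : ∀ z, ∑ v, (G.adjMatrix ℝ) z v * F v = (1 - Λ/2) * (d z * F z) := by
    intro z
    have e : ∑ v, (G.adjMatrix ℝ) z v * F v = (∑ v, (G.adjMatrix ℝ) z v * f v) / M := by
      rw [Finset.sum_div]
      exact Finset.sum_congr rfl fun v _ => by rw [hF]; ring
    rw [e, heig z, hF]
    ring
  have hev : ∀ᶠ α in nhdsWithin (1:ℝ) (Set.Iio 1),
      (1 - W1dist G (lazyMeasure G α x) (lazyMeasure G α y)) / (1 - α) ≤ Λ/2 := by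
    filter_upwards [Ioo_mem_nhdsLT_of_mem (show (1:ℝ) ∈ Set.Ioc 0 1 by norm_num)] with α hα
    obtain ⟨hα0, hα1⟩ := hα
    have hW := W1_lower G (lazyMeasure G α x) (lazyMeasure G α y) F
      (lazy_nonneg G x hα0.le hα1.le) (lazy_nonneg G y hα0.le hα1.le)
      (lazy_sum_one G α x (hdegpos x)) (lazy_sum_one G α y (hdegpos y)) hFLip
    rw [lazy_pair G α x F, lazy_pair G α y F, heigF x, heigF y, ← hd x, ← hd y] at hW
    have ex : (1 - α) / d x * ((1 - Λ/2) * (d x * F x)) = (1-α) * (1-Λ/2) * F x := by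
      calc (1 - α) / d x * ((1 - Λ/2) * (d x * F x))
          = (1-α) * (1-Λ/2) * F x * (d x / d x) := by ring
        _ = (1-α) * (1-Λ/2) * F x := by rw [div_self (hdpos x).ne', mul_one]
    have ey : (1 - α) / d y * ((1 - Λ/2) * (d y * F y)) = (1-α) * (1-Λ/2) * F y := by
      calc (1 - α) / d y * ((1 - Λ/2) * (d y * F y))
          = (1-α) * (1-Λ/2) * F y * (d y / d y) := by ring
        _ = (1-α) * (1-Λ/2) * F y := by rw [div_self (hdpos y).ne', mul_one]
    rw [ex, ey] at hW
    have hlin : α * F x + (1 - α) * (1 - Λ/2) * F x - (α * F y + (1 - α) * (1 - Λ/2) * F y)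
        = (α + (1-α)*(1-Λ/2)) * (F x - F y) := by ring
    rw [hlin, hFxy, mul_one] at hW
    have hW2 : α + (1-α) * (1-Λ/2) ≤ W1dist G (lazyMeasure G α x) (lazyMeasure G α y) := hW
    rw [div_le_iff₀ (by linarith : (0:ℝ) < 1 - α)]
    linarith
  have hricci_le : ricci x y ≤ Λ/2 := le_of_tendsto (hricci x y hadj) hev
  have hκr := hbound x y hadj
  linarith
end

section
/- Let G be a finite simple undirected connected graph and let κ > 0. If JLC(i,j) ≥ κ for every edge (i,j) ∈ E, then Ollivier's Ricci curvature satisfies κ(i,j) ≥ κ > 0 for every edge (i,j) ∈ E. -/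
open Matrix Finset

/-- The measure `m_x`, uniform on the neighbors of `x`:
`m_x(v) = 1/d_x` if `v ∈ N(x)` and `0` otherwise. -/
noncomputable def unifMeasure {N : ℕ} (G : SimpleGraph (Fin N)) [DecidableRel G.Adj]
    (x : Fin N) : Fin N → ℝ :=
  fun v => if G.Adj x v then 1 / (G.degree x : ℝ) else 0

set_option maxHeartbeats 1000000

lemma sum_if_and_eq {n : ℕ} (w : Fin n) (p : Prop) [Decidable p] (c : ℝ) :
    ∑ v, (if p ∧ v = w then c else 0) = if p then c else 0 := by
  by_cases hp : p <;> simp [hp]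

lemma sum_if_and_mem {n : ℕ} (T : Finset (Fin n)) (p : Prop) [Decidable p] (c : ℝ) :
    ∑ v, (if p ∧ v ∈ T then c else 0) = if p then (T.card : ℝ) * c else 0 := by
  by_cases hp : p <;> simp [hp, Finset.sum_ite_mem, mul_comm]

lemma sum_if_eq_and {n : ℕ} (w : Fin n) (p : Prop) [Decidable p] (c : ℝ) :
    ∑ u, (if u = w ∧ p then c else 0) = if p then c else 0 := by
  by_cases hp : p <;> simp [hp]

lemma sum_if_mem_and {n : ℕ} (C : Finset (Fin n)) (p : Prop) [Decidable p] (c : ℝ) :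
    ∑ u, (if u ∈ C ∧ p then c else 0) = if p then (C.card : ℝ) * c else 0 := by
  by_cases hp : p <;> simp [hp, Finset.sum_ite_mem, mul_comm]

lemma sum_if_mem_diag {n : ℕ} (C : Finset (Fin n)) (v : Fin n) (c : ℝ) :
    ∑ u, (if u ∈ C ∧ v = u then c else 0) = if v ∈ C then c else 0 := by
  have h : ∀ u : Fin n, (if u ∈ C ∧ v = u then c else 0) = (if u = v ∧ v ∈ C then c else 0) := by
    intro u
    by_cases h1 : u = v <;> by_cases h2 : v ∈ C <;> simp_all [eq_comm]
  rw [Finset.sum_congr rfl (fun u _ => h u), sum_if_eq_and]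

lemma sum_if_mem {n : ℕ} (C : Finset (Fin n)) (c : ℝ) :
    ∑ u, (if u ∈ C then c else 0) = (C.card : ℝ) * c := by
  simp [Finset.sum_ite_mem, mul_comm]

lemma sum_if_eq {n : ℕ} (w : Fin n) (c : ℝ) :
    ∑ u, (if u = w then c else 0) = c := by simp

lemma W1dist_comm {N : ℕ} (G : SimpleGraph (Fin N)) (μ ν : Fin N → ℝ) :
    W1dist G μ ν = W1dist G ν μ := by
  have hsub : ∀ μ ν : Fin N → ℝ,
      { c : ℝ | ∃ ξ : Fin N → Fin N → ℝ,
        (∀ u v, 0 ≤ ξ u v) ∧ (∀ u, ∑ v, ξ u v = μ u) ∧ (∀ v, ∑ u, ξ u v = ν v) ∧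
        c = ∑ u, ∑ v, (G.dist u v : ℝ) * ξ u v } ⊆
      { c : ℝ | ∃ ξ : Fin N → Fin N → ℝ,
        (∀ u v, 0 ≤ ξ u v) ∧ (∀ u, ∑ v, ξ u v = ν u) ∧ (∀ v, ∑ u, ξ u v = μ v) ∧
        c = ∑ u, ∑ v, (G.dist u v : ℝ) * ξ u v } := by
    rintro μ ν c ⟨ξ, h1, h2, h3, h4⟩
    refine ⟨fun u v => ξ v u, fun u v => h1 v u, h3, h2, ?_⟩
    rw [h4, Finset.sum_comm]
    refine Finset.sum_congr rfl fun u _ => Finset.sum_congr rfl fun v _ => ?_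
    rw [SimpleGraph.dist_comm]
  unfold W1dist
  exact congrArg sInf (le_antisymm (hsub μ ν) (hsub ν μ))

lemma W1dist_le {N : ℕ} (G : SimpleGraph (Fin N)) (μ ν : Fin N → ℝ)
    (ξ : Fin N → Fin N → ℝ) (hpos : ∀ u v, 0 ≤ ξ u v)
    (hrow : ∀ u, ∑ v, ξ u v = μ u) (hcol : ∀ v, ∑ u, ξ u v = ν v)
    (c : ℝ) (hc : ∑ u, ∑ v, (G.dist u v : ℝ) * ξ u v ≤ c) :
    W1dist G μ ν ≤ c := by
  refine le_trans (csInf_le ?_ ?_) hc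
  · refine ⟨0, fun x hx => ?_⟩
    obtain ⟨ξ', h1, _, _, h4⟩ := hx
    rw [h4]
    exact Finset.sum_nonneg fun u _ => Finset.sum_nonneg fun v _ =>
      mul_nonneg (Nat.cast_nonneg _) (h1 u v)
  · exact ⟨ξ, hpos, hrow, hcol, rfl⟩

lemma key {N : ℕ} (G : SimpleGraph (Fin N)) [DecidableRel G.Adj] (hconn : G.Connected)
    (i j : Fin N) (hij : G.Adj i j) (hdeg : G.degree i ≤ G.degree j) :
    W1dist G (unifMeasure G i) (unifMeasure G j) ≤
      1 + max (1 - 1/(G.degree i:ℝ) - 1/(G.degree j:ℝ)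
            - ((G.neighborFinset i ∩ G.neighborFinset j).card:ℝ)/(G.degree i:ℝ)) 0
        + max (1 - 1/(G.degree i:ℝ) - 1/(G.degree j:ℝ)
            - ((G.neighborFinset i ∩ G.neighborFinset j).card:ℝ)/(G.degree j:ℝ)) 0
        - ((G.neighborFinset i ∩ G.neighborFinset j).card:ℝ)/(G.degree j:ℝ) := by
  classical
  set C : Finset (Fin N) := G.neighborFinset i ∩ G.neighborFinset j with hC
  set S : Finset (Fin N) := (G.neighborFinset i \ C).erase j with hSdef
  set T : Finset (Fin N) := (G.neighborFinset j \ C).erase i with hTdef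
  set di : ℝ := (G.degree i : ℝ) with hdi
  set dj : ℝ := (G.degree j : ℝ) with hdj
  set k : ℝ := (C.card : ℝ) with hk
  set Sc : ℝ := (S.card : ℝ) with hScdef
  set Tc : ℝ := (T.card : ℝ) with hTcdef
  clear_value C S T di dj k Sc Tc
  -- basic positivity
  have hdi0 : 0 < di := by
    simp only [hdi]
    exact_mod_cast G.degree_pos_iff_exists_adj i |>.mpr ⟨j, hij⟩
  have hdj0 : 0 < dj := by
    simp only [hdj]
    exact_mod_cast G.degree_pos_iff_exists_adj j |>.mpr ⟨i, hij.symm⟩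
  have hdidj : di ≤ dj := by simp only [hdi, hdj]; exact_mod_cast hdeg
  have hk0 : (0:ℝ) ≤ k := by rw [hk]; positivity
  have hSc0 : (0:ℝ) ≤ Sc := by rw [hScdef]; positivity
  have hTc0 : (0:ℝ) ≤ Tc := by rw [hTcdef]; positivity
  -- membership facts
  have hmemC : ∀ u, u ∈ C ↔ G.Adj i u ∧ G.Adj j u := by
    intro u; simp [hC, SimpleGraph.mem_neighborFinset]
  have hmemS : ∀ u, u ∈ S ↔ u ≠ j ∧ G.Adj i u ∧ ¬ G.Adj j u := by
    intro u
    simp only [hSdef, Finset.mem_erase, Finset.mem_sdiff, SimpleGraph.mem_neighborFinset, hmemC]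
    tauto
  have hmemT : ∀ v, v ∈ T ↔ v ≠ i ∧ G.Adj j v ∧ ¬ G.Adj i v := by
    intro v
    simp only [hTdef, Finset.mem_erase, Finset.mem_sdiff, SimpleGraph.mem_neighborFinset, hmemC]
    tauto
  have hiC : i ∉ C := fun h => G.loopless.irrefl i ((hmemC i).mp h).1
  have hjC : j ∉ C := fun h => G.loopless.irrefl j ((hmemC j).mp h).2
  have hiS : i ∉ S := fun h => G.loopless.irrefl i ((hmemS i).mp h).2.1
  have hjS : j ∉ S := fun h => ((hmemS j).mp h).1 rfl
  have hiT : i ∉ T := fun h => ((hmemT i).mp h).1 rfl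
  have hjT : j ∉ T := fun h => G.loopless.irrefl j ((hmemT j).mp h).2.1
  have hij' : i ≠ j := hij.ne
  have hCS : ∀ u, u ∈ C → u ∉ S := fun u hc hs => ((hmemS u).mp hs).2.2 ((hmemC u).mp hc).2
  have hCT : ∀ u, u ∈ C → u ∉ T := fun u hc ht => ((hmemT u).mp ht).2.2 ((hmemC u).mp hc).1
  have hST : ∀ u, u ∈ S → u ∉ T := fun u hs ht => ((hmemT u).mp ht).2.2 ((hmemS u).mp hs).2.1
  -- set cardinalities
  have hCsubi : C ⊆ G.neighborFinset i := by rw [hC]; exact Finset.inter_subset_left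
  have hCsubj : C ⊆ G.neighborFinset j := by rw [hC]; exact Finset.inter_subset_right
  have hScR : Sc = di - k - 1 := by
    have hjmem : j ∈ G.neighborFinset i \ C := by
      simp only [Finset.mem_sdiff, SimpleGraph.mem_neighborFinset]
      exact ⟨hij, hjC⟩
    have h1 : S.card = (G.neighborFinset i \ C).card - 1 := by
      rw [hSdef]; exact Finset.card_erase_of_mem hjmem
    have h2 : (G.neighborFinset i \ C).card = G.degree i - C.card := by
      rw [Finset.card_sdiff_of_subset hCsubi]; rfl
    have h3 : 1 ≤ (G.neighborFinset i \ C).card := Finset.card_pos.mpr ⟨j, hjmem⟩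
    have h4 : C.card ≤ G.degree i := Finset.card_le_card hCsubi
    have h5 : 1 ≤ G.degree i - C.card := h2 ▸ h3
    rw [hScdef, h1, h2, Nat.cast_sub h5, Nat.cast_sub h4]
    simp [hdi, hk]
  have hTcR : Tc = dj - k - 1 := by
    have himem : i ∈ G.neighborFinset j \ C := by
      simp only [Finset.mem_sdiff, SimpleGraph.mem_neighborFinset]
      exact ⟨hij.symm, hiC⟩
    have h1 : T.card = (G.neighborFinset j \ C).card - 1 := by
      rw [hTdef]; exact Finset.card_erase_of_mem himem
    have h2 : (G.neighborFinset j \ C).card = G.degree j - C.card := by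
      rw [Finset.card_sdiff_of_subset hCsubj]; rfl
    have h3 : 1 ≤ (G.neighborFinset j \ C).card := Finset.card_pos.mpr ⟨i, himem⟩
    have h4 : C.card ≤ G.degree j := Finset.card_le_card hCsubj
    have h5 : 1 ≤ G.degree j - C.card := h2 ▸ h3
    rw [hTcdef, h1, h2, Nat.cast_sub h5, Nat.cast_sub h4]
    simp [hdj, hk]
  -- transport amounts
  set a1 : ℝ := min (Sc/di) (1/dj) with ha1def
  set a2 : ℝ := min (k/di - k/dj) (1/dj - a1) with ha2def
  set a3 : ℝ := 1/dj - a1 - a2 with ha3def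
  set b1 : ℝ := 1/di - a3 with hb1def
  set b2 : ℝ := (k/di - k/dj) - a2 with hb2def
  set b3 : ℝ := Sc/di - a1 with hb3def
  clear_value a1 a2 a3 b1 b2 b3
  have hE0 : (0:ℝ) ≤ k/di - k/dj := by
    have h1 : k/dj ≤ k/di := div_le_div_of_nonneg_left hk0 hdi0 hdidj
    linarith
  have ha1 : 0 ≤ a1 := by rw [ha1def]; exact le_min (div_nonneg hSc0 hdi0.le) (by positivity)
  have ha1' : a1 ≤ 1/dj := by rw [ha1def]; exact min_le_right _ _
  have ha1'' : a1 ≤ Sc/di := by rw [ha1def]; exact min_le_left _ _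
  have ha2 : 0 ≤ a2 := by rw [ha2def]; exact le_min hE0 (by linarith)
  have ha2' : a2 ≤ 1/dj - a1 := by rw [ha2def]; exact min_le_right _ _
  have ha2'' : a2 ≤ k/di - k/dj := by rw [ha2def]; exact min_le_left _ _
  have ha3 : 0 ≤ a3 := by rw [ha3def]; linarith
  have hinv : 1/dj ≤ 1/di := one_div_le_one_div_of_le hdi0 hdidj
  have hb1 : 0 ≤ b1 := by rw [hb1def, ha3def]; linarith
  have hb2 : 0 ≤ b2 := by rw [hb2def]; linarith
  have hb3 : 0 ≤ b3 := by rw [hb3def]; linarith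
  have hsum5 : b1 + b2 + b3 = Tc/dj := by
    rw [hb1def, hb2def, hb3def, ha3def, hScR, hTcR]
    field_simp
    ring
  have hT0 : Tc = 0 → b1 = 0 ∧ b2 = 0 ∧ b3 = 0 := by
    intro h
    rw [h, zero_div] at hsum5
    exact ⟨by linarith, by linarith, by linarith⟩
  have hS0 : Sc = 0 → a1 = 0 ∧ b3 = 0 := by
    intro h
    have : a1 ≤ 0 := by rw [ha1def, h, zero_div]; exact min_le_left _ _
    have h1 : a1 = 0 := le_antisymm this ha1
    exact ⟨h1, by rw [hb3def, h1, h, zero_div, sub_zero]⟩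
  have hk00 : k = 0 → a2 = 0 ∧ b2 = 0 := by
    intro h
    have hE : k/di - k/dj = 0 := by rw [h]; simp
    have : a2 ≤ 0 := by rw [ha2def, hE]; exact min_le_left _ _
    have h1 : a2 = 0 := le_antisymm this ha2
    exact ⟨h1, by rw [hb2def, hE, h1, sub_zero]⟩
  -- the coupling
  set ξ : Fin N → Fin N → ℝ := fun u v =>
    (if u ∈ C ∧ v = u then 1/dj else 0) +
    (if u ∈ C ∧ v = i then a2/k else 0) +
    (if u ∈ C ∧ v ∈ T then b2/(k*Tc) else 0) +
    (if u ∈ S ∧ v = i then a1/Sc else 0) +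
    (if u ∈ S ∧ v ∈ T then b3/(Sc*Tc) else 0) +
    (if u = j ∧ v = i then a3 else 0) +
    (if u = j ∧ v ∈ T then b1/Tc else 0) with hξ
  clear_value ξ
  have hξpos : ∀ u v, 0 ≤ ξ u v := by
    intro u v
    rw [hξ]
    have h1 : (0:ℝ) ≤ 1/dj := by positivity
    have h2 : (0:ℝ) ≤ a2/k := div_nonneg ha2 hk0
    have h3 : (0:ℝ) ≤ b2/(k*Tc) := div_nonneg hb2 (mul_nonneg hk0 hTc0)
    have h4 : (0:ℝ) ≤ a1/Sc := div_nonneg ha1 hSc0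
    have h5 : (0:ℝ) ≤ b3/(Sc*Tc) := div_nonneg hb3 (mul_nonneg hSc0 hTc0)
    have h7 : (0:ℝ) ≤ b1/Tc := div_nonneg hb1 hTc0
    dsimp only
    repeat' apply add_nonneg
    all_goals split
    all_goals first | assumption | exact ha3 | exact le_refl 0
  have hrowsum : ∀ u, ∑ v, ξ u v =
      (if u ∈ C then 1/dj else 0) + (if u ∈ C then a2/k else 0) +
      (if u ∈ C then Tc * (b2/(k*Tc)) else 0) + (if u ∈ S then a1/Sc else 0) +
      (if u ∈ S then Tc * (b3/(Sc*Tc)) else 0) + (if u = j then a3 else 0) +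
      (if u = j then Tc * (b1/Tc) else 0) := by
    intro u
    rw [hξ]
    dsimp only
    rw [Finset.sum_add_distrib, Finset.sum_add_distrib, Finset.sum_add_distrib,
      Finset.sum_add_distrib, Finset.sum_add_distrib, Finset.sum_add_distrib,
      sum_if_and_eq, sum_if_and_eq, sum_if_and_eq, sum_if_and_eq,
      sum_if_and_mem, sum_if_and_mem, sum_if_and_mem, ← hTcdef]
  have hrow : ∀ u, ∑ v, ξ u v = unifMeasure G i u := by
    intro u
    rw [hrowsum u]
    unfold unifMeasure
    by_cases huC : u ∈ C
    · have h1 : u ∉ S := hCS u huC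
      have h2 : u ≠ j := fun h => hjC (h ▸ huC)
      have hadj : G.Adj i u := ((hmemC u).mp huC).1
      simp only [huC, h1, h2, hadj, if_true, if_false, if_pos, if_neg, not_false_iff,
        add_zero, zero_add]
      have hkpos : (0:ℝ) < k := by
        rw [hk]
        exact_mod_cast Finset.card_pos.mpr ⟨u, huC⟩
      rcases eq_or_lt_of_le hTc0 with hT | hT
      · obtain ⟨_, hb2z, _⟩ := hT0 hT.symm
        have ha2E : a2 = k/di - k/dj := by rw [hb2def] at hb2z; linarith
        rw [← hT, ha2E]
        rw [← hdi]
        field_simp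
        ring
      · have hTr : Tc * (b2/(k*Tc)) = b2/k := by field_simp
        rw [hTr, ← hdi]
        have hab : a2 + b2 = k * (1/di - 1/dj) := by rw [hb2def]; ring
        have h2' : a2/k + b2/k = 1/di - 1/dj := by
          rw [← add_div, hab, mul_div_cancel_left₀ _ (ne_of_gt hkpos)]
        linarith
    · by_cases huS : u ∈ S
      · have h2 : u ≠ j := fun h => hjS (h ▸ huS)
        have hadj : G.Adj i u := ((hmemS u).mp huS).2.1
        simp only [huC, huS, h2, hadj, if_true, if_false, if_pos, if_neg, not_false_iff,
          add_zero, zero_add]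
        have hSpos : (0:ℝ) < Sc := by
          rw [hScdef]
          exact_mod_cast Finset.card_pos.mpr ⟨u, huS⟩
        rcases eq_or_lt_of_le hTc0 with hT | hT
        · obtain ⟨_, _, hb3z⟩ := hT0 hT.symm
          have ha1E : a1 = Sc/di := by rw [hb3def] at hb3z; linarith
          rw [← hT, ha1E, ← hdi]
          field_simp
          ring
        · have hTr : Tc * (b3/(Sc*Tc)) = b3/Sc := by field_simp
          rw [hTr, ← hdi]
          have hab : a1 + b3 = Sc * (1/di) := by rw [hb3def]; ring
          have h2' : a1/Sc + b3/Sc = 1/di := by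
            rw [← add_div, hab, mul_div_cancel_left₀ _ (ne_of_gt hSpos)]
          linarith
      · by_cases huj : u = j
        · subst huj
          simp only [hjC, hjS, hij, if_true, if_false, if_pos, if_neg, not_false_iff,
            add_zero, zero_add]
          rcases eq_or_lt_of_le hTc0 with hT | hT
          · obtain ⟨hb1z, _, _⟩ := hT0 hT.symm
            have : a3 = 1/di := by rw [hb1def] at hb1z; linarith
            rw [← hT, this, ← hdi]
            simp
          · have hTr : Tc * (b1/Tc) = b1 := by field_simp
            rw [hTr, ← hdi, hb1def]
            ring
        · have hnadj : ¬ G.Adj i u := by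
            intro hadj
            by_cases hujC : u ∈ C
            · exact huC hujC
            · exact huS ((hmemS u).mpr ⟨huj, hadj, fun hja => hujC ((hmemC u).mpr ⟨hadj, hja⟩)⟩)
          simp [huC, huS, huj, hnadj]
  have hcolsum : ∀ v, ∑ u, ξ u v =
      (if v ∈ C then 1/dj else 0) + (if v = i then k * (a2/k) else 0) +
      (if v ∈ T then k * (b2/(k*Tc)) else 0) + (if v = i then Sc * (a1/Sc) else 0) +
      (if v ∈ T then Sc * (b3/(Sc*Tc)) else 0) + (if v = i then a3 else 0) +
      (if v ∈ T then b1/Tc else 0) := by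
    intro v
    rw [hξ]
    dsimp only
    rw [Finset.sum_add_distrib, Finset.sum_add_distrib, Finset.sum_add_distrib,
      Finset.sum_add_distrib, Finset.sum_add_distrib, Finset.sum_add_distrib,
      sum_if_mem_diag, sum_if_mem_and, sum_if_mem_and, sum_if_mem_and, sum_if_mem_and,
      sum_if_eq_and, sum_if_eq_and, ← hk, ← hScdef]
  have hcol : ∀ v, ∑ u, ξ u v = unifMeasure G j v := by
    intro v
    rw [hcolsum v]
    unfold unifMeasure
    by_cases hvC : v ∈ C
    · have h1 : v ≠ i := fun h => hiC (h ▸ hvC)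
      have h2 : v ∉ T := hCT v hvC
      have hadj : G.Adj j v := ((hmemC v).mp hvC).2
      simp [hvC, h1, h2, hadj, ← hdj]
    · by_cases hvi : v = i
      · have hadj : G.Adj j i := hij.symm
        simp only [hvi, hiC, hiT, hadj, if_true, if_false, if_pos, if_neg, not_false_iff,
          add_zero, zero_add]
        have h1 : k * (a2/k) = a2 := by
          rcases eq_or_lt_of_le hk0 with h | h
          · rw [← h, (hk00 h.symm).1]; simp
          · field_simp
        have h2 : Sc * (a1/Sc) = a1 := by
          rcases eq_or_lt_of_le hSc0 with h | h
          · rw [← h, (hS0 h.symm).1]; simp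
          · field_simp
        rw [h1, h2, ← hdj, ha3def]
        ring
      · by_cases hvT : v ∈ T
        · have hadj : G.Adj j v := ((hmemT v).mp hvT).2.1
          simp only [hvC, hvi, hvT, hadj, if_true, if_false, if_pos, if_neg, not_false_iff,
            add_zero, zero_add]
          have hTpos : (0:ℝ) < Tc := by
            rw [hTcdef]
            exact_mod_cast Finset.card_pos.mpr ⟨v, hvT⟩
          have h1 : k * (b2/(k*Tc)) = b2/Tc := by
            rcases eq_or_lt_of_le hk0 with h | h
            · rw [← h, (hk00 h.symm).2]; simp
            · field_simp
          have h2 : Sc * (b3/(Sc*Tc)) = b3/Tc := by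
            rcases eq_or_lt_of_le hSc0 with h | h
            · rw [← h, (hS0 h.symm).2]; simp
            · field_simp
          have h3 : b2/Tc + b3/Tc + b1/Tc = 1/dj := by
            rw [← add_div, ← add_div]
            have : b2 + b3 + b1 = Tc/dj := by linarith
            rw [this]
            rw [div_div, mul_comm, ← div_div, div_self (ne_of_gt hTpos)]
          rw [h1, h2, ← hdj]
          linarith
        · have hnadj : ¬ G.Adj j v := by
            intro hadj
            by_cases hvjC : v ∈ C
            · exact hvC hvjC
            · exact hvT ((hmemT v).mpr ⟨hvi, hadj, fun hia => hvjC ((hmemC v).mpr ⟨hia, hadj⟩)⟩)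
          simp [hvC, hvi, hvT, hnadj]
  -- distance facts
  have hdist1 : ∀ u : Fin N, G.Adj i u → ((G.dist u i : ℕ) : ℝ) ≤ 1 := by
    intro u h
    rw [SimpleGraph.dist_eq_one_iff_adj.mpr h.symm]
    norm_num
  have hdistji : ((G.dist j i : ℕ) : ℝ) ≤ 1 := hdist1 j hij
  have hdistjT : ∀ v, v ∈ T → ((G.dist j v : ℕ) : ℝ) ≤ 1 := by
    intro v hv
    rw [SimpleGraph.dist_eq_one_iff_adj.mpr ((hmemT v).mp hv).2.1]
    norm_num
  have hdist2 : ∀ u v, u ∈ C → v ∈ T → ((G.dist u v : ℕ) : ℝ) ≤ 2 := by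
    intro u v hu hv
    have h1 : G.dist u v ≤ G.dist u j + G.dist j v := hconn.dist_triangle
    have h2 : G.dist u j = 1 := SimpleGraph.dist_eq_one_iff_adj.mpr ((hmemC u).mp hu).2.symm
    have h3 : G.dist j v = 1 := SimpleGraph.dist_eq_one_iff_adj.mpr ((hmemT v).mp hv).2.1
    have : G.dist u v ≤ 2 := by omega
    exact_mod_cast this
  have hdist3 : ∀ u v, u ∈ S → v ∈ T → ((G.dist u v : ℕ) : ℝ) ≤ 3 := by
    intro u v hu hv
    have h1 : G.dist u v ≤ G.dist u i + G.dist i v := hconn.dist_triangle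
    have h1' : G.dist i v ≤ G.dist i j + G.dist j v := hconn.dist_triangle
    have h2 : G.dist u i = 1 := SimpleGraph.dist_eq_one_iff_adj.mpr ((hmemS u).mp hu).2.1.symm
    have h3 : G.dist i j = 1 := SimpleGraph.dist_eq_one_iff_adj.mpr hij
    have h4 : G.dist j v = 1 := SimpleGraph.dist_eq_one_iff_adj.mpr ((hmemT v).mp hv).2.1
    have : G.dist u v ≤ 3 := by omega
    exact_mod_cast this
  -- cost bound
  have hsplit : ∑ u, ∑ v, (G.dist u v : ℝ) * ξ u v =
      (∑ u, ∑ v, (G.dist u v : ℝ) * (if u ∈ C ∧ v = u then 1/dj else 0)) +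
      (∑ u, ∑ v, (G.dist u v : ℝ) * (if u ∈ C ∧ v = i then a2/k else 0)) +
      (∑ u, ∑ v, (G.dist u v : ℝ) * (if u ∈ C ∧ v ∈ T then b2/(k*Tc) else 0)) +
      (∑ u, ∑ v, (G.dist u v : ℝ) * (if u ∈ S ∧ v = i then a1/Sc else 0)) +
      (∑ u, ∑ v, (G.dist u v : ℝ) * (if u ∈ S ∧ v ∈ T then b3/(Sc*Tc) else 0)) +
      (∑ u, ∑ v, (G.dist u v : ℝ) * (if u = j ∧ v = i then a3 else 0)) +
      (∑ u, ∑ v, (G.dist u v : ℝ) * (if u = j ∧ v ∈ T then b1/Tc else 0)) := by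
    rw [hξ]
    dsimp only
    simp only [mul_add, Finset.sum_add_distrib]
  have hB1 : (∑ u, ∑ v, (G.dist u v : ℝ) * (if u ∈ C ∧ v = u then 1/dj else 0)) = 0 := by
    refine Finset.sum_eq_zero fun u _ => Finset.sum_eq_zero fun v _ => ?_
    by_cases h : u ∈ C ∧ v = u
    · obtain ⟨h1, rfl⟩ := h
      simp [SimpleGraph.dist_self]
    · simp [h]
  have hB2 : (∑ u, ∑ v, (G.dist u v : ℝ) * (if u ∈ C ∧ v = i then a2/k else 0)) ≤ a2 := by
    have hc : (0:ℝ) ≤ a2/k := div_nonneg ha2 hk0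
    have step : ∀ u v : Fin N, (G.dist u v : ℝ) * (if u ∈ C ∧ v = i then a2/k else 0) ≤
        (if u ∈ C ∧ v = i then 1 * (a2/k) else 0) := by
      intro u v
      by_cases h : u ∈ C ∧ v = i
      · rw [if_pos h, if_pos h, h.2]
        exact mul_le_mul_of_nonneg_right (hdist1 u ((hmemC u).mp h.1).1) hc
      · simp [h]
    calc (∑ u, ∑ v, (G.dist u v : ℝ) * (if u ∈ C ∧ v = i then a2/k else 0))
        ≤ ∑ u, ∑ v, (if u ∈ C ∧ v = i then 1 * (a2/k) else 0) :=
          Finset.sum_le_sum fun u _ => Finset.sum_le_sum fun v _ => step u v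
      _ = k * (1 * (a2/k)) := by
          simp only [sum_if_and_eq, sum_if_mem]
          rw [← hk]
      _ ≤ a2 := by
          rcases eq_or_lt_of_le hk0 with h | h
          · rw [← h]; simpa using ha2
          · rw [one_mul]; field_simp; exact le_rfl
  have hB3 : (∑ u, ∑ v, (G.dist u v : ℝ) * (if u ∈ C ∧ v ∈ T then b2/(k*Tc) else 0)) ≤ 2*b2 := by
    have hc : (0:ℝ) ≤ b2/(k*Tc) := div_nonneg hb2 (mul_nonneg hk0 hTc0)
    have step : ∀ u v : Fin N, (G.dist u v : ℝ) * (if u ∈ C ∧ v ∈ T then b2/(k*Tc) else 0) ≤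
        (if u ∈ C ∧ v ∈ T then 2 * (b2/(k*Tc)) else 0) := by
      intro u v
      by_cases h : u ∈ C ∧ v ∈ T
      · rw [if_pos h, if_pos h]
        exact mul_le_mul_of_nonneg_right (hdist2 u v h.1 h.2) hc
      · simp [h]
    calc (∑ u, ∑ v, (G.dist u v : ℝ) * (if u ∈ C ∧ v ∈ T then b2/(k*Tc) else 0))
        ≤ ∑ u, ∑ v, (if u ∈ C ∧ v ∈ T then 2 * (b2/(k*Tc)) else 0) :=
          Finset.sum_le_sum fun u _ => Finset.sum_le_sum fun v _ => step u v
      _ = k * (Tc * (2 * (b2/(k*Tc)))) := by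
          simp only [sum_if_and_mem, sum_if_mem]
          rw [← hk, ← hTcdef]
      _ ≤ 2*b2 := by
          rcases eq_or_lt_of_le hk0 with h | h
          · rw [← h]; simp; linarith
          · rcases eq_or_lt_of_le hTc0 with h2 | h2
            · rw [← h2]; simp; linarith
            · apply le_of_eq; field_simp
  have hB4 : (∑ u, ∑ v, (G.dist u v : ℝ) * (if u ∈ S ∧ v = i then a1/Sc else 0)) ≤ a1 := by
    have hc : (0:ℝ) ≤ a1/Sc := div_nonneg ha1 hSc0
    have step : ∀ u v : Fin N, (G.dist u v : ℝ) * (if u ∈ S ∧ v = i then a1/Sc else 0) ≤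
        (if u ∈ S ∧ v = i then 1 * (a1/Sc) else 0) := by
      intro u v
      by_cases h : u ∈ S ∧ v = i
      · rw [if_pos h, if_pos h, h.2]
        exact mul_le_mul_of_nonneg_right (hdist1 u ((hmemS u).mp h.1).2.1) hc
      · simp [h]
    calc (∑ u, ∑ v, (G.dist u v : ℝ) * (if u ∈ S ∧ v = i then a1/Sc else 0))
        ≤ ∑ u, ∑ v, (if u ∈ S ∧ v = i then 1 * (a1/Sc) else 0) :=
          Finset.sum_le_sum fun u _ => Finset.sum_le_sum fun v _ => step u v
      _ = Sc * (1 * (a1/Sc)) := by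
          simp only [sum_if_and_eq, sum_if_mem]
          rw [← hScdef]
      _ ≤ a1 := by
          rcases eq_or_lt_of_le hSc0 with h | h
          · rw [← h]; simpa using ha1
          · rw [one_mul]; field_simp; exact le_rfl
  have hB5 : (∑ u, ∑ v, (G.dist u v : ℝ) * (if u ∈ S ∧ v ∈ T then b3/(Sc*Tc) else 0)) ≤ 3*b3 := by
    have hc : (0:ℝ) ≤ b3/(Sc*Tc) := div_nonneg hb3 (mul_nonneg hSc0 hTc0)
    have step : ∀ u v : Fin N, (G.dist u v : ℝ) * (if u ∈ S ∧ v ∈ T then b3/(Sc*Tc) else 0) ≤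
        (if u ∈ S ∧ v ∈ T then 3 * (b3/(Sc*Tc)) else 0) := by
      intro u v
      by_cases h : u ∈ S ∧ v ∈ T
      · rw [if_pos h, if_pos h]
        exact mul_le_mul_of_nonneg_right (hdist3 u v h.1 h.2) hc
      · simp [h]
    calc (∑ u, ∑ v, (G.dist u v : ℝ) * (if u ∈ S ∧ v ∈ T then b3/(Sc*Tc) else 0))
        ≤ ∑ u, ∑ v, (if u ∈ S ∧ v ∈ T then 3 * (b3/(Sc*Tc)) else 0) :=
          Finset.sum_le_sum fun u _ => Finset.sum_le_sum fun v _ => step u v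
      _ = Sc * (Tc * (3 * (b3/(Sc*Tc)))) := by
          simp only [sum_if_and_mem, sum_if_mem]
          rw [← hScdef, ← hTcdef]
      _ ≤ 3*b3 := by
          rcases eq_or_lt_of_le hSc0 with h | h
          · rw [← h]; simp; linarith
          · rcases eq_or_lt_of_le hTc0 with h2 | h2
            · rw [← h2]; simp; linarith
            · apply le_of_eq; field_simp
  have hB6 : (∑ u, ∑ v, (G.dist u v : ℝ) * (if u = j ∧ v = i then a3 else 0)) ≤ a3 := by
    have step : ∀ u v : Fin N, (G.dist u v : ℝ) * (if u = j ∧ v = i then a3 else 0) ≤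
        (if u = j ∧ v = i then 1 * a3 else 0) := by
      intro u v
      by_cases h : u = j ∧ v = i
      · rw [if_pos h, if_pos h, h.1, h.2]
        exact mul_le_mul_of_nonneg_right hdistji ha3
      · simp [h]
    calc (∑ u, ∑ v, (G.dist u v : ℝ) * (if u = j ∧ v = i then a3 else 0))
        ≤ ∑ u, ∑ v, (if u = j ∧ v = i then 1 * a3 else 0) :=
          Finset.sum_le_sum fun u _ => Finset.sum_le_sum fun v _ => step u v
      _ = 1 * a3 := by
          simp only [sum_if_and_eq, sum_if_eq]
      _ ≤ a3 := by rw [one_mul]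
  have hB7 : (∑ u, ∑ v, (G.dist u v : ℝ) * (if u = j ∧ v ∈ T then b1/Tc else 0)) ≤ b1 := by
    have hc : (0:ℝ) ≤ b1/Tc := div_nonneg hb1 hTc0
    have step : ∀ u v : Fin N, (G.dist u v : ℝ) * (if u = j ∧ v ∈ T then b1/Tc else 0) ≤
        (if u = j ∧ v ∈ T then 1 * (b1/Tc) else 0) := by
      intro u v
      by_cases h : u = j ∧ v ∈ T
      · rw [if_pos h, if_pos h, h.1]
        exact mul_le_mul_of_nonneg_right (hdistjT v h.2) hc
      · simp [h]
    calc (∑ u, ∑ v, (G.dist u v : ℝ) * (if u = j ∧ v ∈ T then b1/Tc else 0))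
        ≤ ∑ u, ∑ v, (if u = j ∧ v ∈ T then 1 * (b1/Tc) else 0) :=
          Finset.sum_le_sum fun u _ => Finset.sum_le_sum fun v _ => step u v
      _ = Tc * (1 * (b1/Tc)) := by
          simp only [sum_if_and_mem, sum_if_eq]
          rw [← hTcdef]
      _ ≤ b1 := by
          rcases eq_or_lt_of_le hTc0 with h | h
          · rw [← h]; simpa using hb1
          · rw [one_mul]; field_simp; exact le_rfl
  have hcost : ∑ u, ∑ v, (G.dist u v : ℝ) * ξ u v ≤ a1 + a2 + a3 + b1 + 2*b2 + 3*b3 := by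
    rw [hsplit]
    linarith
  have ht : 1 - 1/di - 1/dj - k/di = Sc/di - 1/dj := by
    rw [hScR]; field_simp; ring
  have hs : 1 - 1/di - 1/dj - k/dj = Sc/di - 1/dj + (k/di - k/dj) := by
    rw [hScR]; field_simp; ring
  have hfinal : a1 + a2 + a3 + b1 + 2*b2 + 3*b3 ≤
      1 + max (1 - 1/di - 1/dj - k/di) 0 + max (1 - 1/di - 1/dj - k/dj) 0 - k/dj := by
    have hA1 := ha1def
    have hA2 := ha2def
    rcases min_cases (Sc/di) (1/dj) with ⟨h1, h1'⟩ | ⟨h1, h1'⟩ <;> rw [h1] at hA1 <;>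
      rcases min_cases (k/di - k/dj) (1/dj - a1) with ⟨h2, h2'⟩ | ⟨h2, h2'⟩ <;> rw [h2] at hA2
    · rw [max_eq_right (show (1 - 1/di - 1/dj - k/di) ≤ 0 by linarith),
        max_eq_right (show (1 - 1/di - 1/dj - k/dj) ≤ 0 by linarith)]
      linarith
    · rw [max_eq_right (show (1 - 1/di - 1/dj - k/di) ≤ 0 by linarith),
        max_eq_left (show (0:ℝ) ≤ (1 - 1/di - 1/dj - k/dj) by linarith)]
      linarith
    · rw [max_eq_left (show (0:ℝ) ≤ (1 - 1/di - 1/dj - k/di) by linarith),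
        max_eq_left (show (0:ℝ) ≤ (1 - 1/di - 1/dj - k/dj) by linarith)]
      linarith
    · rw [max_eq_left (show (0:ℝ) ≤ (1 - 1/di - 1/dj - k/di) by linarith),
        max_eq_left (show (0:ℝ) ≤ (1 - 1/di - 1/dj - k/dj) by linarith)]
      linarith
  exact W1dist_le G _ _ ξ hξpos hrow hcol _ (hcost.trans hfinal)

/-- Corollary 2: on a finite simple undirected connected graph, if
`JLC(i,j) ≥ κ > 0` for every edge `(i,j)`, then Ollivier's Ricci curvature
`κ(i,j) = 1 − W₁(m_i, m_j)` satisfies `κ(i,j) ≥ κ > 0` for every edge `(i,j)`. -/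
theorem stmt_7
    {N : ℕ}
    (G : SimpleGraph (Fin N)) [DecidableRel G.Adj]
    (hconn : G.Connected)
    -- degrees
    (d : Fin N → ℝ)
    (hd : ∀ i, d i = (G.degree i : ℝ))
    (hdpos : ∀ i, 0 < d i)
    -- number of triangles containing each edge: #(i,j) = |N(i) ∩ N(j)|
    (tri : Fin N → Fin N → ℝ)
    (htri : ∀ i j, tri i j = ((G.neighborFinset i ∩ G.neighborFinset j).card : ℝ))
    -- positive lower bound κ on the JLC of every edge
    (κ : ℝ) (hκ : 0 < κ)
    (hJLC : ∀ i j, G.Adj i j →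
      κ ≤ -(max (1 - 1 / d i - 1 / d j - tri i j / min (d i) (d j)) 0)
            - max (1 - 1 / d i - 1 / d j - tri i j / max (d i) (d j)) 0
            + tri i j / max (d i) (d j)) :
    ∀ i j, G.Adj i j → κ ≤ 1 - W1dist G (unifMeasure G i) (unifMeasure G j) := by
  intro i j hij
  have hJ := hJLC i j hij
  rw [hd i, hd j, htri i j] at hJ
  rcases le_total (G.degree i) (G.degree j) with h | h
  · have hkey := key G hconn i j hij h
    have hdiR : ((G.degree i:ℝ)) ≤ (G.degree j:ℝ) := by exact_mod_cast h
    rw [min_eq_left hdiR, max_eq_right hdiR] at hJ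
    linarith
  · have hkey := key G hconn j i hij.symm h
    have hdjR : ((G.degree j:ℝ)) ≤ (G.degree i:ℝ) := by exact_mod_cast h
    rw [min_eq_right hdjR, max_eq_left hdjR] at hJ
    have hcomm : G.neighborFinset j ∩ G.neighborFinset i
        = G.neighborFinset i ∩ G.neighborFinset j := Finset.inter_comm _ _
    rw [hcomm] at hkey
    rw [W1dist_comm G (unifMeasure G i) (unifMeasure G j)]
    have e1 : (1 - 1/(G.degree j:ℝ) - 1/(G.degree i:ℝ)
          - ((G.neighborFinset i ∩ G.neighborFinset j).card:ℝ)/(G.degree j:ℝ))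
        = (1 - 1/(G.degree i:ℝ) - 1/(G.degree j:ℝ)
          - ((G.neighborFinset i ∩ G.neighborFinset j).card:ℝ)/(G.degree j:ℝ)) := by ring
    have e2 : (1 - 1/(G.degree j:ℝ) - 1/(G.degree i:ℝ)
          - ((G.neighborFinset i ∩ G.neighborFinset j).card:ℝ)/(G.degree i:ℝ))
        = (1 - 1/(G.degree i:ℝ) - 1/(G.degree j:ℝ)
          - ((G.neighborFinset i ∩ G.neighborFinset j).card:ℝ)/(G.degree i:ℝ)) := by ring
    rw [e1, e2] at hkey
    linarith
end
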